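/- arXiv:2403.00750 — 9 statements merged into one kernel-verified Lean document; each statement's English description precedes it below -/
import Mathlib

section
/- If B is an edge open packing set of a finite simple graph G, then every connected component of the spanning subgraph of G with edge set B that contains an edge is a star K_{1,t} (it has at most one vertex of degree greater than 1), and moreover each such star component is an induced subgraph of G (no two leaves of a star component, and no leaf and center of distinct components joined by an edge of B, are adjacent in G via an edge creating a common edge); in particular, no edge of G joins two leaves of the same star component. -/
open scoped Classical

variable {V : Type*}

/-- Two edges `e₁, e₂` have a common edge in `G` if some edge of `G`, different from both,
joins an endvertex of `e₁` to an endvertex of `e₂`. -/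
def HasCommonEdge (G : SimpleGraph V) (e₁ e₂ : Sym2 V) : Prop :=
  ∃ x y : V, x ∈ e₁ ∧ y ∈ e₂ ∧ G.Adj x y ∧ s(x, y) ≠ e₁ ∧ s(x, y) ≠ e₂

/-- `B` is an edge open packing set of `G`: a set of edges of `G` no two distinct members
of which have a common edge in `G`. -/
def IsEOP (G : SimpleGraph V) (B : Set (Sym2 V)) : Prop :=
  B ⊆ G.edgeSet ∧ ∀ e₁ ∈ B, ∀ e₂ ∈ B, e₁ ≠ e₂ → ¬ HasCommonEdge G e₁ e₂

/-- The degree of a vertex `x` in the (spanning) subgraph with edge set `S`: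
the number of edges of `S` incident with `x`. -/
noncomputable def degS (S : Set (Sym2 V)) (x : V) : ℕ :=
  {e ∈ S | x ∈ e}.ncard

lemma exists_other {B : Set (Sym2 V)} {a : V} (h : 1 < degS B a) (f : Sym2 V) :
    ∃ e ∈ B, a ∈ e ∧ e ≠ f := by
  obtain ⟨e, he, hef⟩ := Set.exists_ne_of_one_lt_ncard h f
  exact ⟨e, he.1, he.2, hef⟩

/-- the "length ≥ 2 path plus extra edge at the start" contradiction -/
lemma no_long {G : SimpleGraph V} {B : Set (Sym2 V)} (hB : IsEOP G B)
    {a v c : V} (ha : 1 < degS B a)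
    (h1 : (SimpleGraph.fromEdgeSet B).Adj a v)
    (h2 : (SimpleGraph.fromEdgeSet B).Adj v c) (hac : a ≠ c) : False := by
  obtain ⟨hsub, hEOP⟩ := hB
  rw [SimpleGraph.fromEdgeSet_adj] at h1 h2
  obtain ⟨e₀, he₀B, hae₀, he₀ne⟩ := exists_other ha s(a, v)
  have hane : a ≠ v := h1.2
  have h2B : s(v, c) ∈ B := h2.1
  have he₀ne2 : e₀ ≠ s(v, c) := by
    intro h
    rw [h] at hae₀
    rcases Sym2.mem_iff.mp hae₀ with rfl | rfl
    · exact hane rfl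
    · exact hac rfl
  refine hEOP e₀ he₀B s(v, c) h2B he₀ne2 ?_
  refine ⟨a, v, hae₀, Sym2.mem_mk_left v c, (SimpleGraph.mem_edgeSet G).mp (hsub h1.1), fun h => he₀ne h.symm, ?_⟩
  intro h
  rcases Sym2.eq_iff.mp h with ⟨h3, _⟩ | ⟨h3, _⟩
  · exact hane h3
  · exact hac h3

/-- If `B` is an EOP set of `G` then:
(1) every connected component of the spanning subgraph with edge set `B` contains at most one
vertex of degree greater than `1` (so each component containing an edge is a star `K_{1,t}`);
(2) two distinct leaves attached to a common center are never adjacent in `G` (each star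
component is an induced subgraph of `G`); in particular no edge of `G` joins two leaves of the
same star component;
(3) no two vertices covered by `B` and lying in distinct components are adjacent in `G`
(no leaf and center of distinct components are joined by an edge of `G`, which would create a
common edge). -/
theorem stmt0 [Fintype V] (G : SimpleGraph V) (B : Set (Sym2 V)) (hB : IsEOP G B) :
    (∀ a b : V, (SimpleGraph.fromEdgeSet B).Reachable a b →
        1 < degS B a → 1 < degS B b → a = b) ∧
    (∀ a b c : V, a ≠ b → s(c, a) ∈ B → s(c, b) ∈ B → ¬ G.Adj a b) ∧
    (∀ e₁ ∈ B, ∀ e₂ ∈ B, ∀ x y : V, x ∈ e₁ → y ∈ e₂ →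
        ¬ (SimpleGraph.fromEdgeSet B).Reachable x y → ¬ G.Adj x y) := by
  obtain ⟨hsub, hEOP⟩ := hB
  refine ⟨?_, ?_, ?_⟩
  · intro a b hr ha hb
    by_contra hab
    obtain ⟨w⟩ := hr
    obtain ⟨q, hq⟩ := w.toPath
    cases q with
    | nil => exact hab rfl
    | cons h1 q' =>
      rename_i v
      cases q' with
      | nil =>
        -- h1 : Adj a b, both degrees > 1
        rw [SimpleGraph.fromEdgeSet_adj] at h1
        obtain ⟨e₀, he₀B, hae₀, he₀ne⟩ := exists_other ha s(a, b)
        obtain ⟨e₂, he₂B, hbe₂, he₂ne⟩ := exists_other hb s(a, b)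
        have hne : e₀ ≠ e₂ := by
          rintro rfl
          exact he₀ne ((Sym2.mem_and_mem_iff hab).mp ⟨hae₀, hbe₂⟩)
        exact hEOP e₀ he₀B e₂ he₂B hne
          ⟨a, b, hae₀, hbe₂, (SimpleGraph.mem_edgeSet G).mp (hsub h1.1),
            fun h => he₀ne h.symm, fun h => he₂ne h.symm⟩
      | cons h2 q'' =>
        rename_i v2
        rw [SimpleGraph.Walk.cons_isPath_iff] at hq
        have hav2 : a ≠ v2 := by
          rintro rfl
          exact hq.2 (by simp)
        exact no_long ⟨hsub, hEOP⟩ ha h1 h2 hav2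
  · intro a b c hab hca hcb hadj
    have hca' : G.Adj c a := (SimpleGraph.mem_edgeSet G).mp (hsub hca)
    have hcb' : G.Adj c b := (SimpleGraph.mem_edgeSet G).mp (hsub hcb)
    have hne : s(c, a) ≠ s(c, b) := by
      intro h
      rcases Sym2.eq_iff.mp h with ⟨_, h2⟩ | ⟨h2, h3⟩
      · exact hab h2
      · exact hab (h3.trans h2)
    refine hEOP s(c, a) hca s(c, b) hcb hne
      ⟨a, b, Sym2.mem_mk_right c a, Sym2.mem_mk_right c b, hadj, ?_, ?_⟩
    · intro h
      rcases Sym2.eq_iff.mp h with ⟨h2, _⟩ | ⟨_, h3⟩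
      · exact hca'.ne h2.symm
      · exact hcb'.ne h3.symm
    · intro h
      rcases Sym2.eq_iff.mp h with ⟨h2, _⟩ | ⟨h2, _⟩
      · exact hca'.ne h2.symm
      · exact hab h2
  · intro e₁ he₁ e₂ he₂ x y hx hy hnr hadj
    have hxy : x ≠ y := hadj.ne
    have key : ∀ e ∈ B, x ∈ e → y ∈ e → False := by
      intro e he hxe hye
      have hexy : e = s(x, y) := (Sym2.mem_and_mem_iff hxy).mp ⟨hxe, hye⟩
      exact hnr ((SimpleGraph.fromEdgeSet_adj B).mpr ⟨hexy ▸ he, hxy⟩).reachable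
    have hne : e₁ ≠ e₂ := by
      rintro rfl
      exact key e₁ he₁ hx hy
    exact hEOP e₁ he₁ e₂ he₂ hne
      ⟨x, y, hx, hy, hadj,
        fun h => key e₁ he₁ hx (h ▸ Sym2.mem_mk_right x y),
        fun h => key e₂ he₂ (h ▸ Sym2.mem_mk_left x y) hy⟩
end

section
/- For every finite simple graph G, delta(G) * rho_e^o(G) <= |E(G)|, where delta(G) is the minimum degree of G; equivalently, if delta(G) >= 1 then rho_e^o(G) <= |E(G)|/delta(G). -/
open scoped Classical

variable {V : Type*}

/-- The edge open packing number of `G`: the maximum cardinality of an EOP set of `G`. -/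
noncomputable def eopNum (G : SimpleGraph V) : ℕ :=
  sSup {n | ∃ B : Set (Sym2 V), IsEOP G B ∧ B.ncard = n}

lemma eop_key [Fintype V] (G : SimpleGraph V) {B : Set (Sym2 V)} (hB : IsEOP G B) :
    G.minDegree * B.ncard ≤ G.edgeSet.ncard := by
  classical
  obtain ⟨hsub, hpack⟩ := hB
  rcases B.eq_empty_or_nonempty with rfl | hBne
  · simp
  have hV : Nonempty V := ⟨hBne.choose.out.1⟩
  -- every edge of B has an endpoint that is in no other edge of B
  have hchoice : ∀ e ∈ B, ∃ z, z ∈ e ∧ ∀ e' ∈ B, e' ≠ e → z ∉ e' := by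
    intro e
    induction e using Sym2.ind with
    | _ u v =>
      intro he
      by_contra hcon
      push_neg at hcon
      have hadj : G.Adj u v := G.mem_edgeSet.mp (hsub he)
      obtain ⟨e₁, he₁B, he₁ne, hu⟩ := hcon u (by simp)
      obtain ⟨e₂, he₂B, he₂ne, hv⟩ := hcon v (by simp)
      have hne12 : e₁ ≠ e₂ := by
        rintro rfl
        exact he₁ne ((Sym2.mem_and_mem_iff hadj.ne).mp ⟨hu, hv⟩)
      exact hpack e₁ he₁B e₂ he₂B hne12
        ⟨u, v, hu, hv, hadj, fun h => he₁ne h.symm, fun h => he₂ne h.symm⟩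
  have hchoice' : ∀ e : Sym2 V, ∃ z : V,
      e ∈ B → (z ∈ e ∧ ∀ e' ∈ B, e' ≠ e → z ∉ e') := by
    intro e
    by_cases he : e ∈ B
    · obtain ⟨z, h1, h2⟩ := hchoice e he
      exact ⟨z, fun _ => ⟨h1, h2⟩⟩
    · exact ⟨Classical.arbitrary V, fun h => absurd h he⟩
  choose z hz using hchoice'
  have hBfin : B.Finite := Set.toFinite B
  set Bf : Finset (Sym2 V) := hBfin.toFinset with hBf
  have hmemBf : ∀ {e}, e ∈ Bf → e ∈ B := fun h => hBfin.mem_toFinset.mp h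
  set F : Sym2 V → Finset (Sym2 V) := fun e => G.incidenceFinset (z e) with hF
  have hdisj : (Bf : Set (Sym2 V)).PairwiseDisjoint F := by
    intro e₁ he₁ e₂ he₂ hne
    have he₁B : e₁ ∈ B := hmemBf he₁
    have he₂B : e₂ ∈ B := hmemBf he₂
    simp only [Function.onFun]
    rw [Finset.disjoint_left]
    intro f hf₁ hf₂
    rw [hF, G.mem_incidenceFinset] at hf₁ hf₂
    obtain ⟨hfE₁, hz₁f⟩ := hf₁
    obtain ⟨_, hz₂f⟩ := hf₂
    have hz₁ := hz e₁ he₁B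
    have hz₂ := hz e₂ he₂B
    have hzne : z e₁ ≠ z e₂ := by
      intro h
      exact hz₁.2 e₂ he₂B (Ne.symm hne) (h ▸ hz₂.1)
    have hfeq : f = s(z e₁, z e₂) := (Sym2.mem_and_mem_iff hzne).mp ⟨hz₁f, hz₂f⟩
    have hadj : G.Adj (z e₁) (z e₂) := G.mem_edgeSet.mp (hfeq ▸ hfE₁)
    by_cases h1 : f = e₁
    · exact hz₂.2 e₁ he₁B hne (h1 ▸ hz₂f)
    by_cases h2 : f = e₂
    · exact hz₁.2 e₂ he₂B (Ne.symm hne) (h2 ▸ hz₁f)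
    exact hpack e₁ he₁B e₂ he₂B hne
      ⟨z e₁, z e₂, hz₁.1, hz₂.1, hadj, hfeq ▸ h1, hfeq ▸ h2⟩
  have hsubset : Bf.biUnion F ⊆ G.edgeSet.toFinset := by
    intro f hf
    obtain ⟨e, _, hfe⟩ := Finset.mem_biUnion.mp hf
    rw [hF, G.mem_incidenceFinset] at hfe
    exact Set.mem_toFinset.mpr hfe.1
  calc G.minDegree * B.ncard = ∑ _e ∈ Bf, G.minDegree := by
        rw [Finset.sum_const, smul_eq_mul, mul_comm, Set.ncard_eq_toFinset_card _ hBfin]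
    _ ≤ ∑ e ∈ Bf, (F e).card := by
        refine Finset.sum_le_sum fun e _ => ?_
        rw [hF]
        rw [G.card_incidenceFinset_eq_degree]
        exact G.minDegree_le_degree _
    _ = (Bf.biUnion F).card := (Finset.card_biUnion hdisj).symm
    _ ≤ G.edgeSet.toFinset.card := Finset.card_le_card hsubset
    _ = G.edgeSet.ncard := (Set.ncard_eq_toFinset_card' _).symm

theorem stmt1 [Fintype V] (G : SimpleGraph V) :
    G.minDegree * eopNum G ≤ G.edgeSet.ncard ∧
    (1 ≤ G.minDegree → eopNum G ≤ G.edgeSet.ncard / G.minDegree) := by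
  classical
  have hbdd : BddAbove {n | ∃ B : Set (Sym2 V), IsEOP G B ∧ B.ncard = n} := by
    refine ⟨G.edgeSet.ncard, ?_⟩
    rintro n ⟨B, hB, rfl⟩
    exact Set.ncard_le_ncard hB.1 (Set.toFinite _)
  have hne : {n | ∃ B : Set (Sym2 V), IsEOP G B ∧ B.ncard = n}.Nonempty :=
    ⟨0, ∅, ⟨Set.empty_subset _, fun e he => absurd he (Set.notMem_empty e)⟩, by simp⟩
  have hmem := Nat.sSup_mem hne hbdd
  obtain ⟨B, hB, hcard⟩ := hmem
  have h1 : G.minDegree * eopNum G ≤ G.edgeSet.ncard := by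
    rw [eopNum, ← hcard]
    exact eop_key G hB
  refine ⟨h1, fun hδ => ?_⟩
  rw [Nat.le_div_iff_mul_le hδ]
  rwa [mul_comm] at h1
end

section
/- Let G be a finite simple graph with at least one edge and minimum degree delta(G) >= 1, and let m = |E(G)|. Then rho_e^o(G) * delta(G) = m if and only if G is a disjoint union of stars or G belongs to the family F. -/
open scoped Classical

variable {V : Type*}

/-- `G` is a disjoint union of stars `K_{1,t}` (`t ≥ 1`): it has no isolated vertices and
every edge has an endvertex of degree `1`; equivalently, every connected component of `G`
is a star. -/
def IsDisjointUnionOfStars (G : SimpleGraph V) : Prop :=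
  (∀ v : V, (G.neighborSet v).Nonempty) ∧
  (∀ a b : V, G.Adj a b → (G.neighborSet a).ncard = 1 ∨ (G.neighborSet b).ncard = 1)

/-- `G` belongs to the family `ℱ`: `G` is bipartite with minimum degree `k ≥ 2`, its vertex
set partitions into `A`, `B`, `C` with partite sets `A ∪ C` and `B`, and every vertex of `B`
has exactly one neighbor in `A` and exactly `k - 1` neighbors in `C`. -/
def InFamilyF (G : SimpleGraph V) [Fintype V] : Prop :=
  2 ≤ G.minDegree ∧
  ∃ A B C : Set V,
    A ∪ B ∪ C = Set.univ ∧ A ∩ B = ∅ ∧ A ∩ C = ∅ ∧ B ∩ C = ∅ ∧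
    (∀ a b : V, G.Adj a b → (a ∈ A ∪ C ∧ b ∈ B) ∨ (a ∈ B ∧ b ∈ A ∪ C)) ∧
    (∀ b ∈ B, (G.neighborSet b ∩ A).ncard = 1 ∧
      (G.neighborSet b ∩ C).ncard = G.minDegree - 1)

/-!
Every edge `e` of an edge open packing `P` has a private endpoint, lying on no other edge of `P`,
and two private endpoints are never adjacent, since the edge joining them would be a common edge.
So the edges at the private endpoints are pairwise distinct and `|P| δ ≤ Σ deg ≤ m`. Equality
for a maximum packing forces the private endpoints to form an independent vertex cover `B` whose
vertices have degree `δ`, and each `b ∈ B` is adjacent to exactly one of the other endpoints of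
the packing edges: these form the set `A` of the family `F` when `δ ≥ 2`, while for `δ = 1` every
edge has an endpoint of degree one. Conversely, in `F` the edges joining each `b ∈ B` to its
neighbour in `A` form a packing of size `|B| = m / δ`, and the edge set of a disjoint union of
stars is itself a packing.
-/

open Finset

section
variable [Fintype V] {G : SimpleGraph V}

namespace SimpleGraph

lemma ncard_edgeSet : G.edgeSet.ncard = #G.edgeFinset := by
  rw [← G.coe_edgeFinset, Set.ncard_coe_finset]

lemma ncard_neighborSet (v : V) : (G.neighborSet v).ncard = G.degree v := by
  rw [Set.ncard_eq_toFinset_card', Set.toFinset_card, card_neighborSet_eq_degree]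

lemma degree_eq_ncard_inter_add_ncard_inter {v : V} {A C : Set V}
    (hsub : G.neighborSet v ⊆ A ∪ C) (hAC : Disjoint A C) :
    G.degree v = (G.neighborSet v ∩ A).ncard + (G.neighborSet v ∩ C).ncard := by
  have hsplit : G.neighborSet v = (G.neighborSet v ∩ A) ∪ (G.neighborSet v ∩ C) := by
    rw [← Set.inter_union_distrib_left, Set.inter_eq_left.2 hsub]
  rw [← ncard_neighborSet, ← Set.ncard_union_eq
    (hAC.mono Set.inter_subset_right Set.inter_subset_right), ← hsplit]

lemma biUnion_incidenceFinset_subset (s : Finset V) :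
    s.biUnion (G.incidenceFinset ·) ⊆ G.edgeFinset := by
  intro e he
  obtain ⟨v, -, hv⟩ := mem_biUnion.1 he
  exact mem_edgeFinset.2 ((G.mem_incidenceFinset v e).1 hv).1

namespace IsIndepSet
variable {s : Finset V}

lemma sum_degree_eq_card_biUnion (hs : G.IsIndepSet s) :
    ∑ v ∈ s, G.degree v = #(s.biUnion (G.incidenceFinset ·)) := by
  rw [card_biUnion]
  · exact sum_congr rfl fun v _ => (G.card_incidenceFinset_eq_degree v).symm
  · intro v hv w hw hvw
    rw [Function.onFun, Finset.disjoint_left]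
    intro e hev hew
    rw [mem_incidenceFinset] at hev hew
    have he : e = s(v, w) := (Sym2.mem_and_mem_iff hvw).1 ⟨hev.2, hew.2⟩
    exact hs hv hw hvw (G.mem_edgeSet.1 (he ▸ hev.1))

lemma sum_degree_le_card_edgeFinset (hs : G.IsIndepSet s) :
    ∑ v ∈ s, G.degree v ≤ #G.edgeFinset := by
  rw [hs.sum_degree_eq_card_biUnion]
  exact card_le_card (biUnion_incidenceFinset_subset s)

lemma sum_degree_eq_card_edgeFinset_iff (hs : G.IsIndepSet s) :
    ∑ v ∈ s, G.degree v = #G.edgeFinset ↔ G.IsVertexCover s := by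
  rw [hs.sum_degree_eq_card_biUnion]
  constructor
  · intro h v w hvw
    have hU : s.biUnion (G.incidenceFinset ·) = G.edgeFinset :=
      eq_of_subset_of_card_le (biUnion_incidenceFinset_subset s) h.ge
    have hvw' : s(v, w) ∈ s.biUnion (G.incidenceFinset ·) := hU ▸ mem_edgeFinset.2 hvw
    obtain ⟨u, hu, hue⟩ := mem_biUnion.1 hvw'
    rcases Sym2.mem_iff.1 ((G.mem_incidenceFinset u _).1 hue).2 with rfl | rfl
    · exact Or.inl hu
    · exact Or.inr hu
  · intro hcov
    congr 1
    refine (biUnion_incidenceFinset_subset s).antisymm fun e he => ?_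
    induction e with
    | _ v w =>
      have hvw : G.Adj v w := mem_edgeFinset.1 he
      rcases hcov hvw with hv | hw
      · exact mem_biUnion.2 ⟨v, hv, (G.mem_incidenceFinset v _).2 ⟨hvw, Sym2.mem_mk_left v w⟩⟩
      · exact mem_biUnion.2 ⟨w, hw, (G.mem_incidenceFinset w _).2 ⟨hvw, Sym2.mem_mk_right v w⟩⟩

end IsIndepSet

end SimpleGraph

end

section
variable {G : SimpleGraph V}

def IsPrivateEndpoint (P : Set (Sym2 V)) (e : Sym2 V) (v : V) : Prop :=
  v ∈ e ∧ ∀ e' ∈ P, e' ≠ e → v ∉ e'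

lemma IsPrivateEndpoint.eq_of_mem {P : Set (Sym2 V)} {e e' : Sym2 V} {v : V}
    (hv : IsPrivateEndpoint P e v) (he' : e' ∈ P) (hve' : v ∈ e') : e' = e := by
  by_contra hne
  exact hv.2 e' he' hne hve'

namespace IsEOP

section
variable {P : Set (Sym2 V)} {e e' : Sym2 V} {v w x : V}

lemma exists_isPrivateEndpoint (hP : IsEOP G P) (he : e ∈ P) : ∃ v, IsPrivateEndpoint P e v := by
  induction e with
  | _ u w =>
    by_contra! hno
    simp only [IsPrivateEndpoint, not_and, not_forall, not_not] at hno
    obtain ⟨e₁, he₁, hne₁, hu⟩ := hno u (Sym2.mem_mk_left u w)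
    obtain ⟨e₂, he₂, hne₂, hw⟩ := hno w (Sym2.mem_mk_right u w)
    have huw : G.Adj u w := hP.1 he
    by_cases h₁₂ : e₁ = e₂
    · exact hne₁ ((Sym2.mem_and_mem_iff huw.ne).1 ⟨hu, h₁₂ ▸ hw⟩)
    · exact hP.2 e₁ he₁ e₂ he₂ h₁₂ ⟨u, w, hu, hw, huw, Ne.symm hne₁, Ne.symm hne₂⟩

lemma exists_forall_isPrivateEndpoint (hP : IsEOP G P) :
    ∃ ℓ : Sym2 V → V, ∀ e ∈ P, IsPrivateEndpoint P e (ℓ e) := by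
  have h : ∀ e, ∃ v, e ∈ P → IsPrivateEndpoint P e v := fun e =>
    if he : e ∈ P then (hP.exists_isPrivateEndpoint he).imp fun _ hv _ => hv
    else ⟨e.out.1, fun h => absurd h he⟩
  choose ℓ hℓ using h
  exact ⟨ℓ, hℓ⟩

lemma mem_of_adj (hP : IsEOP G P) (he : e ∈ P) (hv : IsPrivateEndpoint P e v) (he' : e' ∈ P)
    (hx : x ∈ e') (hvx : G.Adj v x) : x ∈ e := by
  by_contra hxe
  have hne : e ≠ e' := fun h => hxe (h ▸ hx)
  exact hP.2 e he e' he' hne ⟨v, x, hv.1, hx, hvx, fun h => hxe (h ▸ Sym2.mem_mk_right v x),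
    fun h => hv.2 e' he' hne.symm (h ▸ Sym2.mem_mk_left v x)⟩

lemma not_adj (hP : IsEOP G P) (he : e ∈ P) (he' : e' ∈ P) (hne : e ≠ e')
    (hv : IsPrivateEndpoint P e v) (hw : IsPrivateEndpoint P e' w) : ¬G.Adj v w :=
  fun hvw => hw.2 e he hne (hP.mem_of_adj he hv he' hw.1 hvw)

end

variable {P : Finset (Sym2 V)} {ℓ : Sym2 V → V}

lemma isIndepSet_image (hP : IsEOP G P) (hℓ : ∀ e ∈ P, IsPrivateEndpoint P e (ℓ e)) :
    G.IsIndepSet (P.image ℓ : Set V) := by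
  rintro _ hv _ hw hvw
  obtain ⟨e, he, rfl⟩ := mem_image.1 hv
  obtain ⟨e', he', rfl⟩ := mem_image.1 hw
  exact hP.not_adj he he' (fun h => hvw (h ▸ rfl)) (hℓ e he) (hℓ e' he')

end IsEOP

section
variable {P : Finset (Sym2 V)} {ℓ : Sym2 V → V}

lemma card_image_of_forall_isPrivateEndpoint (hℓ : ∀ e ∈ P, IsPrivateEndpoint P e (ℓ e)) :
    #(P.image ℓ) = #P :=
  card_image_of_injOn fun e he e' he' h => ((hℓ e he).eq_of_mem he' (h ▸ (hℓ e' he').1)).symm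

lemma exists_forall_eq_mk_of_isPrivateEndpoint (hℓ : ∀ e ∈ P, IsPrivateEndpoint P e (ℓ e)) :
    ∃ a : V → V, ∀ e ∈ P, e = s(ℓ e, a (ℓ e)) := by
  have h : ∀ v, ∃ x, ∀ e ∈ P, ℓ e = v → e = s(v, x) := fun v => by
    by_cases hv : ∃ e ∈ P, ℓ e = v
    · obtain ⟨e, he, rfl⟩ := hv
      obtain ⟨x, hx⟩ := Sym2.mem_iff_exists.1 (hℓ e he).1
      exact ⟨x, fun e' he' h => ((hℓ e he).eq_of_mem he' (h ▸ (hℓ e' he').1)).trans hx⟩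
    · exact ⟨v, fun e he h => absurd ⟨e, he, h⟩ hv⟩
  choose a ha using h
  exact ⟨a, fun e he => ha _ e he rfl⟩

variable [Fintype V]

lemma card_mul_minDegree_le_sum_degree_image (hℓ : ∀ e ∈ P, IsPrivateEndpoint P e (ℓ e)) :
    #P * G.minDegree ≤ ∑ v ∈ P.image ℓ, G.degree v := by
  rw [← card_image_of_forall_isPrivateEndpoint hℓ, ← smul_eq_mul, ← sum_const]
  exact sum_le_sum fun v _ => G.minDegree_le_degree v

lemma IsEOP.card_mul_minDegree_le (hP : IsEOP G P) : #P * G.minDegree ≤ G.edgeSet.ncard := by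
  obtain ⟨ℓ, hℓ⟩ := hP.exists_forall_isPrivateEndpoint
  rw [G.ncard_edgeSet]
  exact (card_mul_minDegree_le_sum_degree_image hℓ).trans
    (hP.isIndepSet_image hℓ).sum_degree_le_card_edgeFinset

end

variable [Fintype V]

lemma bddAbove_ncard_isEOP : BddAbove {n | ∃ B : Set (Sym2 V), IsEOP G B ∧ B.ncard = n} := by
  refine ⟨G.edgeSet.ncard, ?_⟩
  rintro n ⟨B, hB, rfl⟩
  exact Set.ncard_le_ncard hB.1

lemma IsEOP.ncard_le_eopNum {P : Set (Sym2 V)} (hP : IsEOP G P) : P.ncard ≤ eopNum G :=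
  le_csSup bddAbove_ncard_isEOP ⟨P, hP, rfl⟩

lemma exists_isEOP_card_eq_eopNum : ∃ P : Finset (Sym2 V), IsEOP G P ∧ #P = eopNum G := by
  obtain ⟨P, hP, hcard⟩ : eopNum G ∈ {n | ∃ B : Set (Sym2 V), IsEOP G B ∧ B.ncard = n} :=
    Nat.sSup_mem ⟨0, ∅, ⟨Set.empty_subset _, by simp⟩, Set.ncard_empty _⟩ bddAbove_ncard_isEOP
  obtain ⟨P, rfl⟩ := P.toFinite.exists_finset_coe
  exact ⟨P, hP, by rwa [Set.ncard_coe_finset] at hcard⟩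

lemma eopNum_mul_minDegree_le : eopNum G * G.minDegree ≤ G.edgeSet.ncard := by
  obtain ⟨P, hP, hcard⟩ := exists_isEOP_card_eq_eopNum (G := G)
  exact hcard ▸ hP.card_mul_minDegree_le

end

section
variable {G : SimpleGraph V}

/-- The sets `a '' B` and `B` play the roles of `A` and `B` in `InFamilyF`. -/
structure IsAnchoredCover (G : SimpleGraph V) (B : Finset V) (a : V → V) : Prop where
  isIndepSet : G.IsIndepSet B
  isVertexCover : G.IsVertexCover B
  adj_anchor : ∀ b ∈ B, G.Adj b (a b)
  anchor_eq_of_adj : ∀ b ∈ B, ∀ b' ∈ B, G.Adj b (a b') → a b' = a b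

namespace IsEOP
variable {P : Finset (Sym2 V)} {ℓ : Sym2 V → V}

lemma isAnchoredCover_image (hP : IsEOP G P) (hℓ : ∀ e ∈ P, IsPrivateEndpoint P e (ℓ e))
    {a : V → V} (ha : ∀ e ∈ P, e = s(ℓ e, a (ℓ e))) (hcover : G.IsVertexCover (P.image ℓ)) :
    IsAnchoredCover G (P.image ℓ) a where
  isIndepSet := hP.isIndepSet_image hℓ
  isVertexCover := hcover
  adj_anchor := by
    simp only [mem_image, forall_exists_index, and_imp, forall_apply_eq_imp_iff₂]
    exact fun e he => (ha e he ▸ hP.1 he : s(ℓ e, a (ℓ e)) ∈ G.edgeSet)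
  anchor_eq_of_adj := by
    simp only [mem_image, forall_exists_index, and_imp, forall_apply_eq_imp_iff₂]
    intro e he e' he' hadj
    have hmem' : a (ℓ e') ∈ e' :=
      (congrArg (a (ℓ e') ∈ ·) (ha e' he')).mpr (Sym2.mem_mk_right _ _)
    have hmem : a (ℓ e') ∈ e := hP.mem_of_adj he (hℓ e he) he' hmem' hadj
    rw [ha e he] at hmem
    exact (Sym2.mem_iff.1 hmem).resolve_left hadj.ne.symm

end IsEOP

namespace IsAnchoredCover
variable {B : Finset V} {a : V → V} {b : V}

lemma anchor_notMem (h : IsAnchoredCover G B a) (hb : b ∈ B) : a b ∉ B := fun hab =>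
  h.isIndepSet hb hab (h.adj_anchor b hb).ne (h.adj_anchor b hb)

lemma card_image_mk (h : IsAnchoredCover G B a) : #(B.image fun b => s(b, a b)) = #B :=
  card_image_of_injOn fun b₁ hb₁ b₂ hb₂ heq => by
    have hb₁' : b₁ ∈ s(b₂, a b₂) := heq ▸ Sym2.mem_mk_left b₁ (a b₁)
    exact (Sym2.mem_iff.1 hb₁').resolve_right fun hab => h.anchor_notMem hb₂ (hab ▸ hb₁)

lemma isEOP_image_mk (h : IsAnchoredCover G B a) : IsEOP G (B.image fun b => s(b, a b)) := by
  refine ⟨?_, ?_⟩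
  · intro e he
    obtain ⟨b, hb, rfl⟩ := mem_image.1 he
    exact h.adj_anchor b hb
  · rintro _ he₁ _ he₂ - ⟨x, y, hx, hy, hxy, hne₁, hne₂⟩
    obtain ⟨b₁, hb₁, rfl⟩ := mem_image.1 he₁
    obtain ⟨b₂, hb₂, rfl⟩ := mem_image.1 he₂
    rcases Sym2.mem_iff.1 hx with rfl | rfl <;> rcases Sym2.mem_iff.1 hy with rfl | rfl
    · exact h.isIndepSet hb₁ hb₂ hxy.ne hxy
    · exact hne₁ (by rw [h.anchor_eq_of_adj x hb₁ b₂ hb₂ hxy])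
    · exact hne₂ (by rw [h.anchor_eq_of_adj y hb₂ b₁ hb₁ hxy.symm, Sym2.eq_swap])
    · rcases h.isVertexCover hxy with hx | hy
      exacts [h.anchor_notMem hb₁ hx, h.anchor_notMem hb₂ hy]

variable [Fintype V]

lemma card_mul_minDegree_eq (h : IsAnchoredCover G B a)
    (hdeg : ∀ b ∈ B, G.degree b = G.minDegree) : #B * G.minDegree = G.edgeSet.ncard := by
  rw [G.ncard_edgeSet, ← (h.isIndepSet.sum_degree_eq_card_edgeFinset_iff).2 h.isVertexCover,
    sum_congr rfl hdeg, sum_const, smul_eq_mul]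

lemma eopNum_mul_minDegree_eq (h : IsAnchoredCover G B a)
    (hdeg : ∀ b ∈ B, G.degree b = G.minDegree) : eopNum G * G.minDegree = G.edgeSet.ncard := by
  refine eopNum_mul_minDegree_le.antisymm ?_
  rw [← h.card_mul_minDegree_eq hdeg, ← h.card_image_mk, ← Set.ncard_coe_finset]
  exact Nat.mul_le_mul_right _ h.isEOP_image_mk.ncard_le_eopNum

lemma inFamilyF (h : IsAnchoredCover G B a) (hdeg : ∀ b ∈ B, G.degree b = G.minDegree)
    (hδ : 2 ≤ G.minDegree) : InFamilyF G := by
  set A : Set V := a '' B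
  have hAB : Disjoint A B := by
    rw [Set.disjoint_left]
    rintro _ ⟨b, hb, rfl⟩
    exact h.anchor_notMem hb
  have hAC : Disjoint A (A ∪ B)ᶜ := Set.subset_union_left.disjoint_compl_right
  have hnotB : ∀ x, x ∉ B → x ∈ A ∪ (A ∪ B)ᶜ := fun x hx => by
    by_cases hxA : x ∈ A
    · exact Or.inl hxA
    · exact Or.inr fun hx' => hx'.elim hxA hx
  have hnbr : ∀ b ∈ B, ∀ x, G.Adj b x → x ∉ B := fun b hb x hbx hx =>
    h.isIndepSet hb hx hbx.ne hbx
  refine ⟨hδ, A, B, (A ∪ B)ᶜ, Set.union_compl_self _, Set.disjoint_iff_inter_eq_empty.1 hAB,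
    Set.disjoint_iff_inter_eq_empty.1 hAC,
    Set.disjoint_iff_inter_eq_empty.1 Set.subset_union_right.disjoint_compl_right,
    fun x y hxy => ?_, fun b hb => ?_⟩
  · rcases h.isVertexCover hxy with hx | hy
    · exact Or.inr ⟨hx, hnotB y (hnbr x hx y hxy)⟩
    · exact Or.inl ⟨hnotB x (hnbr y hy x hxy.symm), hy⟩
  · have hNA : G.neighborSet b ∩ A = {a b} := by
      ext x
      constructor
      · rintro ⟨hbx, b', hb', rfl⟩
        exact h.anchor_eq_of_adj b hb b' hb' hbx
      · rintro rfl
        exact ⟨h.adj_anchor b hb, b, hb, rfl⟩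
    have hsplit :=
      G.degree_eq_ncard_inter_add_ncard_inter (fun x hx => hnotB x (hnbr b hb x hx)) hAC
    rw [hNA, Set.ncard_singleton, hdeg b hb] at hsplit
    exact ⟨by rw [hNA, Set.ncard_singleton], by omega⟩

end IsAnchoredCover

end

section
variable {G : SimpleGraph V}

lemma SimpleGraph.eq_mk_of_ncard_neighborSet_eq_one {e : Sym2 V} {x y : V} (he : e ∈ G.edgeSet)
    (hx : x ∈ e) (hxy : G.Adj x y) (h : (G.neighborSet x).ncard = 1) : e = s(x, y) := by
  obtain ⟨z, rfl⟩ := Sym2.mem_iff_exists.1 hx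
  obtain ⟨w, hw⟩ := Set.ncard_eq_one.1 h
  have hz : z ∈ G.neighborSet x := he
  have hy : y ∈ G.neighborSet x := hxy
  rw [hw, Set.mem_singleton_iff] at hz hy
  rw [hz, hy]

lemma IsDisjointUnionOfStars.isEOP_edgeSet (hs : IsDisjointUnionOfStars G) :
    IsEOP G G.edgeSet := by
  refine ⟨subset_rfl, ?_⟩
  rintro e₁ he₁ e₂ he₂ - ⟨x, y, hx, hy, hxy, hne₁, hne₂⟩
  rcases hs.2 x y hxy with h | h
  · exact hne₁ (G.eq_mk_of_ncard_neighborSet_eq_one he₁ hx hxy h).symm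
  · exact hne₂ (Sym2.eq_swap.trans (G.eq_mk_of_ncard_neighborSet_eq_one he₂ hy hxy.symm h).symm)

variable [Fintype V]

lemma IsDisjointUnionOfStars.eopNum_mul_minDegree_eq (hs : IsDisjointUnionOfStars G)
    (hδ : 1 ≤ G.minDegree) : eopNum G * G.minDegree = G.edgeSet.ncard :=
  eopNum_mul_minDegree_le.antisymm <|
    hs.isEOP_edgeSet.ncard_le_eopNum.trans (Nat.le_mul_of_pos_right _ hδ)

lemma isDisjointUnionOfStars_of_isVertexCover {B : Set V} (hδ : 1 ≤ G.minDegree)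
    (hB : G.IsVertexCover B) (hdeg : ∀ b ∈ B, G.degree b = 1) : IsDisjointUnionOfStars G := by
  refine ⟨fun v => ?_, fun x y hxy => ?_⟩
  · obtain ⟨w, hw⟩ := (G.degree_pos_iff_exists_adj v).1 (hδ.trans (G.minDegree_le_degree v))
    exact ⟨w, hw⟩
  · rw [G.ncard_neighborSet, G.ncard_neighborSet]
    exact (hB hxy).imp (hdeg x) (hdeg y)

lemma InFamilyF.exists_isAnchoredCover (hF : InFamilyF G) :
    ∃ B a, IsAnchoredCover G B a ∧ ∀ b ∈ B, G.degree b = G.minDegree := by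
  obtain ⟨hδ, A, B, C, -, hAB, hAC, hBC, hbip, hnbr⟩ := hF
  have hB : ∀ x ∈ B, x ∉ A ∪ C := fun x hxB hx => hx.elim
    (fun hxA => hAB.subset ⟨hxA, hxB⟩) (fun hxC => hBC.subset ⟨hxB, hxC⟩)
  have hNB : ∀ b ∈ B, G.neighborSet b ⊆ A ∪ C := fun b hb x hbx =>
    (hbip b x hbx).elim (fun h => absurd h.1 (hB b hb)) And.right
  have hanchor : ∀ b, ∃ x, b ∈ B → G.neighborSet b ∩ A = {x} := fun b =>
    if hb : b ∈ B then (Set.ncard_eq_one.1 (hnbr b hb).1).imp fun _ hx _ => hx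
    else ⟨b, fun h => absurd h hb⟩
  choose a ha using hanchor
  have hmem : ∀ b ∈ B, a b ∈ G.neighborSet b ∩ A := fun b hb => (ha b hb).symm ▸ rfl
  refine ⟨B.toFinset, a, ⟨?_, ?_, ?_, ?_⟩, ?_⟩ <;> simp only [Set.coe_toFinset, Set.mem_toFinset]
  · intro b hb b' hb' _ hbb'
    exact (hbip b b' hbb').elim (fun h => hB b hb h.1) (fun h => hB b' hb' h.2)
  · intro x y hxy
    exact ((hbip x y hxy).imp And.right And.left).symm
  · exact fun b hb => (hmem b hb).1
  · intro b hb b' hb' hbb'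
    have h : a b' ∈ G.neighborSet b ∩ A := ⟨hbb', (hmem b' hb').2⟩
    rwa [ha b hb] at h
  · intro b hb
    rw [G.degree_eq_ncard_inter_add_ncard_inter (hNB b hb) (Set.disjoint_iff_inter_eq_empty.2 hAC),
      (hnbr b hb).1, (hnbr b hb).2]
    omega

lemma exists_isAnchoredCover_of_eopNum_mul_minDegree_eq
    (h : eopNum G * G.minDegree = G.edgeSet.ncard) :
    ∃ B a, IsAnchoredCover G B a ∧ ∀ b ∈ B, G.degree b = G.minDegree := by
  obtain ⟨P, hP, hcard⟩ := exists_isEOP_card_eq_eopNum (G := G)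
  obtain ⟨ℓ, hℓ⟩ := hP.exists_forall_isPrivateEndpoint
  obtain ⟨a, ha⟩ := exists_forall_eq_mk_of_isPrivateEndpoint hℓ
  have hind := hP.isIndepSet_image hℓ
  have hle := card_mul_minDegree_le_sum_degree_image (G := G) hℓ
  rw [hcard, h, G.ncard_edgeSet] at hle
  have hsum := hind.sum_degree_le_card_edgeFinset.antisymm hle
  have hdeg : ∀ b ∈ P.image ℓ, G.degree b = G.minDegree := by
    have hconst : ∑ _ ∈ P.image ℓ, G.minDegree = ∑ v ∈ P.image ℓ, G.degree v := by
      rw [sum_const, smul_eq_mul, card_image_of_forall_isPrivateEndpoint hℓ, hcard, h,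
        G.ncard_edgeSet, hsum]
    exact fun b hb =>
      ((sum_eq_sum_iff_of_le fun v _ => G.minDegree_le_degree v).1 hconst b hb).symm
  exact ⟨_, a, hP.isAnchoredCover_image hℓ ha
    ((hind.sum_degree_eq_card_edgeFinset_iff).1 hsum), hdeg⟩

end

theorem stmt2_general [Fintype V] (G : SimpleGraph V)
    (hδ : 1 ≤ G.minDegree) :
    eopNum G * G.minDegree = G.edgeSet.ncard ↔
      IsDisjointUnionOfStars G ∨ InFamilyF G := by
  constructor
  · intro h
    obtain ⟨B, a, hB, hdeg⟩ := exists_isAnchoredCover_of_eopNum_mul_minDegree_eq h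
    rcases hδ.eq_or_lt with hδ₁ | hδ₂
    · exact Or.inl (isDisjointUnionOfStars_of_isVertexCover hδ hB.isVertexCover
        fun b hb => (hdeg b hb).trans hδ₁.symm)
    · exact Or.inr (hB.inFamilyF hdeg hδ₂)
  · rintro (hs | hF)
    · exact hs.eopNum_mul_minDegree_eq hδ
    · obtain ⟨B, a, hB, hdeg⟩ := hF.exists_isAnchoredCover
      exact hB.eopNum_mul_minDegree_eq hdeg

theorem stmt2 [Fintype V] (G : SimpleGraph V) (hE : G.edgeSet.Nonempty)
    (hδ : 1 ≤ G.minDegree) :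
    eopNum G * G.minDegree = G.edgeSet.ncard ↔
      IsDisjointUnionOfStars G ∨ InFamilyF G :=
  stmt2_general G hδ
end

section
/- Let G be a finite simple graph that belongs to the family F, with bipartition classes A ∪ C and B and minimum degree k = delta(G) >= 2. Then the set [A,B] of all edges of G with one endvertex in A and the other in B is an edge open packing set of G, and consequently rho_e^o(G) * delta(G) = |E(G)|. -/
open scoped Classical

variable {V : Type*}

/-! An EOP set `D` cannot contain an edge `uv` together with an edge at `u` and another edge at `v`,
since `uv` would be their common edge. So every edge of `D` has an endvertex lying on no other edge
of `D`; these private endvertices are distinct and pairwise non-adjacent, hence their incidence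
sets are disjoint and `δ(G) |D| ≤ |E(G)|` in every graph. In a graph of `ℱ` every edge has exactly
one end in `B` and every vertex of `B` has degree `k`, so `|E(G)| = k |B|`, while `[A,B]` is an EOP
set with one edge at each vertex of `B`, so it attains this bound. -/

open Finset SimpleGraph

variable {G : SimpleGraph V}

theorem SimpleGraph.IsIndepSet.sum_degree_le_card_edgeFinset_s3 [Fintype V] [DecidableRel G.Adj]
    {s : Finset V} (hs : G.IsIndepSet (s : Set V)) : ∑ v ∈ s, G.degree v ≤ #G.edgeFinset := by
  have hdisj : (s : Set V).PairwiseDisjoint fun v => G.incidenceFinset v := by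
    intro u hu v hv huv
    rw [Function.onFun, Finset.disjoint_left]
    intro e heu hev
    rw [mem_incidenceFinset] at heu hev
    have he : e = s(u, v) := (Sym2.mem_and_mem_iff huv).mp ⟨heu.2, hev.2⟩
    exact hs hu hv huv (G.mem_edgeSet.mp (he ▸ heu.1))
  calc ∑ v ∈ s, G.degree v = #(s.biUnion fun v => G.incidenceFinset v) := by
        simp only [card_biUnion hdisj, card_incidenceFinset_eq_degree]
    _ ≤ #G.edgeFinset := card_le_card fun e he => by
        obtain ⟨v, -, hev⟩ := mem_biUnion.mp he
        exact G.incidenceFinset_subset v hev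

theorem SimpleGraph.IsBipartiteWith.isIndepSet_left {s t : Set V} (h : G.IsBipartiteWith s t) :
    G.IsIndepSet s := fun _ hu _ hv _ hadj =>
  h.disjoint.ne_of_mem hv (h.mem_of_mem_adj hu hadj) rfl

theorem SimpleGraph.IsBipartiteWith.isIndepSet_right {s t : Set V} (h : G.IsBipartiteWith s t) :
    G.IsIndepSet t :=
  h.symm.isIndepSet_left

theorem SimpleGraph.degree_eq_ncard_inter_add_ncard_inter_s3 [Fintype V] [DecidableRel G.Adj]
    {v : V} {A C : Set V} (hv : G.neighborSet v ⊆ A ∪ C) (hAC : Disjoint A C) :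
    G.degree v = (G.neighborSet v ∩ A).ncard + (G.neighborSet v ∩ C).ncard := by
  rw [← Set.ncard_union_eq (hAC.mono Set.inter_subset_right Set.inter_subset_right),
    ← Set.inter_union_distrib_left, Set.inter_eq_left.mpr hv, ← card_neighborSet_eq_degree,
    Set.ncard_eq_toFinset_card', Set.toFinset_card]

theorem IsEOP.exists_mem_forall_mem_eq {D : Set (Sym2 V)} (hD : IsEOP G D) {e : Sym2 V}
    (he : e ∈ D) : ∃ v ∈ e, ∀ e' ∈ D, v ∈ e' → e' = e := by
  induction e using Sym2.ind with | _ u v => ?_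
  by_contra! h
  obtain ⟨e₁, he₁, hu, hne₁⟩ := h u (Sym2.mem_mk_left u v)
  obtain ⟨e₂, he₂, hv, hne₂⟩ := h v (Sym2.mem_mk_right u v)
  have huv : G.Adj u v := hD.1 he
  have h₁₂ : e₁ ≠ e₂ := by
    rintro rfl
    exact hne₁ ((Sym2.mem_and_mem_iff huv.ne).mp ⟨hu, hv⟩)
  exact hD.2 e₁ he₁ e₂ he₂ h₁₂ ⟨u, v, hu, hv, huv, hne₁.symm, hne₂.symm⟩

theorem IsEOP.minDegree_mul_ncard_le [Fintype V] [DecidableRel G.Adj] {D : Set (Sym2 V)}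
    (hD : IsEOP G D) : G.minDegree * D.ncard ≤ G.edgeSet.ncard := by
  choose w hw hw_priv using fun e : D => hD.exists_mem_forall_mem_eq e.2
  have hinj : Function.Injective w := fun e e' hee' =>
    Subtype.ext (hw_priv e' e e.2 (hee' ▸ hw e))
  have hindep : G.IsIndepSet (Set.range w) := by
    rintro _ ⟨e, rfl⟩ _ ⟨e', rfl⟩ hne hadj
    have hee' : (e : Sym2 V) ≠ e' := fun h => hne (congrArg w (Subtype.ext h))
    refine hD.2 e e.2 e' e'.2 hee' ⟨w e, w e', hw e, hw e', hadj, fun h => ?_, fun h => ?_⟩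
    · exact hee' (hw_priv e' e e.2 (h ▸ Sym2.mem_mk_right _ _))
    · exact hee' (hw_priv e e' e'.2 (h ▸ Sym2.mem_mk_left _ _)).symm
  calc G.minDegree * D.ncard = #(Set.range w).toFinset • G.minDegree := by
        rw [← Set.ncard_eq_toFinset_card', Set.ncard_range_of_injective hinj,
          Nat.card_coe_set_eq, smul_eq_mul, mul_comm]
    _ ≤ ∑ v ∈ (Set.range w).toFinset, G.degree v :=
        card_nsmul_le_sum _ _ _ fun v _ => G.minDegree_le_degree v
    _ ≤ #G.edgeFinset := IsIndepSet.sum_degree_le_card_edgeFinset_s3 (by rwa [Set.coe_toFinset])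
    _ = G.edgeSet.ncard := by rw [← coe_edgeFinset, Set.ncard_coe_finset]

def edgesBetween (G : SimpleGraph V) (A B : Set V) : Set (Sym2 V) :=
  {e | e ∈ G.edgeSet ∧ ∃ a ∈ A, ∃ b ∈ B, e = s(a, b)}

theorem isEOP_edgesBetween {A B : Set V} (hA : G.IsIndepSet A) (hB : G.IsIndepSet B)
    (hA_uniq : ∀ b ∈ B, (G.neighborSet b ∩ A).Subsingleton) : IsEOP G (edgesBetween G A B) := by
  refine ⟨fun e he => he.1, ?_⟩
  rintro _ ⟨he₁, a₁, ha₁, b₁, hb₁, rfl⟩ _ ⟨he₂, a₂, ha₂, b₂, hb₂, rfl⟩ hne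
    ⟨x, y, hx, hy, hxy, hne₁, hne₂⟩
  rw [Sym2.mem_iff] at hx hy
  rcases hx with rfl | rfl <;> rcases hy with rfl | rfl
  · exact hA ha₁ ha₂ hxy.ne hxy
  · obtain rfl := hA_uniq y hb₂ ⟨hxy.symm, ha₁⟩ ⟨(G.mem_edgeSet.mp he₂).symm, ha₂⟩
    exact hne₂ rfl
  · obtain rfl := hA_uniq x hb₁ ⟨hxy, ha₂⟩ ⟨(G.mem_edgeSet.mp he₁).symm, ha₁⟩
    exact hne₁ Sym2.eq_swap
  · exact hB hb₁ hb₂ hxy.ne hxy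

theorem ncard_le_ncard_edgesBetween [Finite V] {A B : Set V} (hAB : Disjoint A B)
    (h : ∀ b ∈ B, ∃ a ∈ A, G.Adj a b) : B.ncard ≤ (edgesBetween G A B).ncard := by
  choose! f hfA hfadj using h
  refine Set.ncard_le_ncard_of_injOn (fun b => s(f b, b))
    (fun b hb => ⟨hfadj b hb, f b, hfA b hb, b, hb, rfl⟩) ?_ (Set.toFinite _)
  intro b hb b' hb' hbb'
  rcases Sym2.eq_iff.mp hbb' with ⟨-, h⟩ | ⟨-, h⟩
  · exact h
  · exact (hAB.ne_of_mem (hfA b' hb') hb h.symm).elim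

theorem eopNum_eq_ncard {D : Set (Sym2 V)} (hD : IsEOP G D)
    (hmax : ∀ D', IsEOP G D' → D'.ncard ≤ D.ncard) : eopNum G = D.ncard :=
  IsGreatest.csSup_eq ⟨⟨D, hD, rfl⟩, by rintro _ ⟨D', hD', rfl⟩; exact hmax D' hD'⟩

theorem eopNum_mul_minDegree_eq [Fintype V] [DecidableRel G.Adj] {D : Set (Sym2 V)}
    (hD : IsEOP G D) (h : D.ncard * G.minDegree = G.edgeSet.ncard) :
    eopNum G * G.minDegree = G.edgeSet.ncard := by
  rcases Nat.eq_zero_or_pos G.minDegree with h0 | hpos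
  · rwa [h0, mul_zero] at h ⊢
  have hmax : ∀ D', IsEOP G D' → D'.ncard ≤ D.ncard := fun D' hD' =>
    Nat.le_of_mul_le_mul_right (by rw [h, mul_comm]; exact hD'.minDegree_mul_ncard_le) hpos
  rw [eopNum_eq_ncard hD hmax, h]

theorem SimpleGraph.IsBipartiteWith.ncard_edgeSet_eq_ncard_mul [Fintype V] [DecidableRel G.Adj]
    {s t : Set V} (h : G.IsBipartiteWith s t) {k : ℕ} (ht : ∀ v ∈ t, G.degree v = k) :
    G.edgeSet.ncard = t.ncard * k := by
  have h' : G.IsBipartiteWith (s.toFinset : Set V) (t.toFinset : Set V) := by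
    simpa only [Set.coe_toFinset] using h
  rw [← coe_edgeFinset, Set.ncard_coe_finset, ← isBipartiteWith_sum_degrees_eq_card_edges' h',
    sum_congr rfl fun v hv => ht v (Set.mem_toFinset.mp hv), sum_const, smul_eq_mul,
    Set.ncard_eq_toFinset_card']

theorem stmt3_general [Fintype V] (G : SimpleGraph V) (A B C : Set V) (k : ℕ)
    (hk : k = G.minDegree) (hk2 : 2 ≤ k)
    (hAB : A ∩ B = ∅) (hAC : A ∩ C = ∅) (hBC : B ∩ C = ∅)
    (hbip : ∀ a b : V, G.Adj a b → (a ∈ A ∪ C ∧ b ∈ B) ∨ (a ∈ B ∧ b ∈ A ∪ C))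
    (hdeg : ∀ b ∈ B, (G.neighborSet b ∩ A).ncard = 1 ∧
      (G.neighborSet b ∩ C).ncard = k - 1) :
    IsEOP G {e : Sym2 V | e ∈ G.edgeSet ∧ ∃ a ∈ A, ∃ b ∈ B, e = s(a, b)} ∧
    eopNum G * G.minDegree = G.edgeSet.ncard := by
  rw [← Set.disjoint_iff_inter_eq_empty] at hAB hAC hBC
  have hG : G.IsBipartiteWith (A ∪ C) B :=
    ⟨Set.disjoint_union_left.mpr ⟨hAB, hBC.symm⟩, fun u v huv => hbip u v huv⟩
  have hdegB : ∀ b ∈ B, G.degree b = k := fun b hb => by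
    rw [degree_eq_ncard_inter_add_ncard_inter_s3 (isBipartiteWith_neighborSet_subset' hG hb) hAC,
      (hdeg b hb).1, (hdeg b hb).2]
    omega
  have hEOP : IsEOP G (edgesBetween G A B) :=
    isEOP_edgesBetween (hG.isIndepSet_left.mono Set.subset_union_left) hG.isIndepSet_right
      fun b hb => Set.ncard_le_one_iff_subsingleton.mp (hdeg b hb).1.le
  have hcard : G.edgeSet.ncard = B.ncard * k := hG.ncard_edgeSet_eq_ncard_mul hdegB
  have hB_adj_A : ∀ b ∈ B, ∃ a ∈ A, G.Adj a b := fun b hb => by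
    obtain ⟨a, hba, ha⟩ := Set.nonempty_of_ncard_ne_zero (s := G.neighborSet b ∩ A)
      (by rw [(hdeg b hb).1]; exact one_ne_zero)
    exact ⟨a, ha, hba.symm⟩
  have hEOP_card : (edgesBetween G A B).ncard = B.ncard := by
    refine le_antisymm (Nat.le_of_mul_le_mul_right ?_ (by omega : 0 < k))
      (ncard_le_ncard_edgesBetween hAB hB_adj_A)
    rw [← hcard, mul_comm, hk]
    exact hEOP.minDegree_mul_ncard_le
  exact ⟨hEOP, eopNum_mul_minDegree_eq hEOP (by rw [hEOP_card, hcard, hk])⟩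

/-- If `G` belongs to the family `ℱ`, with partition `A`, `B`, `C` of its vertex set,
partite sets `A ∪ C` and `B`, minimum degree `k ≥ 2`, and every vertex of `B` having exactly
one neighbor in `A` and exactly `k - 1` neighbors in `C`, then the set `[A,B]` of edges of `G`
with one endvertex in `A` and the other in `B` is an EOP set of `G`, and
`ρₑᵒ(G) * δ(G) = |E(G)|`. -/
theorem stmt3 [Fintype V] (G : SimpleGraph V) (A B C : Set V) (k : ℕ)
    (hk : k = G.minDegree) (hk2 : 2 ≤ k)
    (hcover : A ∪ B ∪ C = Set.univ)
    (hAB : A ∩ B = ∅) (hAC : A ∩ C = ∅) (hBC : B ∩ C = ∅)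
    (hbip : ∀ a b : V, G.Adj a b → (a ∈ A ∪ C ∧ b ∈ B) ∨ (a ∈ B ∧ b ∈ A ∪ C))
    (hdeg : ∀ b ∈ B, (G.neighborSet b ∩ A).ncard = 1 ∧
      (G.neighborSet b ∩ C).ncard = k - 1) :
    IsEOP G {e : Sym2 V | e ∈ G.edgeSet ∧ ∃ a ∈ A, ∃ b ∈ B, e = s(a, b)} ∧
    eopNum G * G.minDegree = G.edgeSet.ncard :=
  stmt3_general G A B C k hk hk2 hAB hAC hBC hbip hdeg
end

section
/- For every finite simple graph G and every edge e of G, rho_e^o(G - e) <= max{2*rho_e^o(G) - 2, rho_e^o(G) + 1}, where G - e denotes the graph obtained from G by deleting the edge e. -/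
open scoped Classical

variable {V : Type*}

lemma eop_bddAbove [Fintype V] (G : SimpleGraph V) :
    BddAbove {n | ∃ B : Set (Sym2 V), IsEOP G B ∧ B.ncard = n} := by
  refine ⟨(Set.univ : Set (Sym2 V)).ncard, ?_⟩
  rintro n ⟨B, _, rfl⟩
  exact Set.ncard_le_ncard (Set.subset_univ B) Set.finite_univ

lemma ncard_le_eopNum [Fintype V] {G : SimpleGraph V} {B : Set (Sym2 V)} (h : IsEOP G B) :
    B.ncard ≤ eopNum G :=
  le_csSup (eop_bddAbove G) ⟨B, h, rfl⟩

lemma exists_eop_max [Fintype V] (G : SimpleGraph V) :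
    ∃ B : Set (Sym2 V), IsEOP G B ∧ B.ncard = eopNum G := by
  have : eopNum G ∈ {n | ∃ B : Set (Sym2 V), IsEOP G B ∧ B.ncard = n} :=
    Nat.sSup_mem ⟨0, ∅, ⟨Set.empty_subset _, by simp⟩, by simp⟩ (eop_bddAbove G)
  exact this

theorem stmt5 [Fintype V] (G : SimpleGraph V) (e : Sym2 V) (he : e ∈ G.edgeSet) :
    eopNum (G.deleteEdges {e}) ≤ max (2 * eopNum G - 2) (eopNum G + 1) := by
  induction e using Sym2.ind with
  | _ x y =>
  set G' := G.deleteEdges {s(x, y)} with hG'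
  have hxy : G.Adj x y := he
  have hxyne : x ≠ y := hxy.ne
  obtain ⟨B, ⟨hBsub, hBeop⟩, hBcard⟩ := exists_eop_max G'
  rw [← hBcard]
  have hG'adj : ∀ a b : V, G'.Adj a b ↔ G.Adj a b ∧ s(a, b) ≠ s(x, y) := by
    intro a b
    simp [hG', SimpleGraph.deleteEdges_adj]
  have hBmem : ∀ f ∈ B, f ∈ G.edgeSet ∧ f ≠ s(x, y) := by
    intro f hf
    have := hBsub hf
    rw [hG', SimpleGraph.edgeSet_deleteEdges] at this
    simpa using this
  have heB : s(x, y) ∉ B := fun h => (hBmem _ h).2 rfl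
  set Bx : Set (Sym2 V) := {f ∈ B | x ∈ f} with hBx
  set By : Set (Sym2 V) := {f ∈ B | y ∈ f} with hBy
  have hnotboth : ∀ f ∈ B, x ∈ f → y ∈ f → False := by
    intro f hf hx hy
    exact (hBmem f hf).2 ((Sym2.mem_and_mem_iff hxyne).1 ⟨hx, hy⟩)
  -- lifting common edges from G to G' or the deleted edge
  have hlift : ∀ f g : Sym2 V, HasCommonEdge G f g →
      HasCommonEdge G' f g ∨ (x ∈ f ∧ y ∈ g) ∨ (y ∈ f ∧ x ∈ g) := by
    rintro f g ⟨u, v, hu, hv, hadj, h1, h2⟩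
    by_cases hcase : s(u, v) = s(x, y)
    · rw [Sym2.eq_iff] at hcase
      rcases hcase with ⟨rfl, rfl⟩ | ⟨rfl, rfl⟩
      · exact Or.inr (Or.inl ⟨hu, hv⟩)
      · exact Or.inr (Or.inr ⟨hu, hv⟩)
    · exact Or.inl ⟨u, v, hu, hv, (hG'adj u v).2 ⟨hadj, hcase⟩, h1, h2⟩
  have hdiffx : IsEOP G (B \ Bx) := by
    constructor
    · intro f hf; exact (hBmem f hf.1).1
    · intro f hf g hg hfg hcom
      rcases hlift f g hcom with h | ⟨hx', _⟩ | ⟨_, hx'⟩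
      · exact hBeop f hf.1 g hg.1 hfg h
      · exact hf.2 ⟨hf.1, hx'⟩
      · exact hg.2 ⟨hg.1, hx'⟩
  have hdiffy : IsEOP G (B \ By) := by
    constructor
    · intro f hf; exact (hBmem f hf.1).1
    · intro f hf g hg hfg hcom
      rcases hlift f g hcom with h | ⟨_, hy'⟩ | ⟨hy', _⟩
      · exact hBeop f hf.1 g hg.1 hfg h
      · exact hg.2 ⟨hg.1, hy'⟩
      · exact hf.2 ⟨hf.1, hy'⟩
  have hcard_x : (B \ Bx).ncard + Bx.ncard = B.ncard :=
    Set.ncard_diff_add_ncard_of_subset (fun f hf => hf.1) (Set.toFinite B)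
  have hcard_y : (B \ By).ncard + By.ncard = B.ncard :=
    Set.ncard_diff_add_ncard_of_subset (fun f hf => hf.1) (Set.toFinite B)
  rcases le_or_gt Bx.ncard 1 with hx1 | hx2
  · -- |Bx| ≤ 1 : B.ncard ≤ eopNum G + 1
    have h1 : (B \ Bx).ncard ≤ eopNum G := ncard_le_eopNum hdiffx
    omega
  rcases le_or_gt By.ncard 1 with hy1 | hy2
  · have h1 : (B \ By).ncard ≤ eopNum G := ncard_le_eopNum hdiffy
    omega
  -- main case : both Bx and By have at least two elements
  obtain ⟨f₁, hf₁, f₂, hf₂, hf12⟩ := (Set.one_lt_ncard (Set.toFinite Bx)).1 hx2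
  obtain ⟨g₁, hg₁, g₂, hg₂, hg12⟩ := (Set.one_lt_ncard (Set.toFinite By)).1 hy2
  -- no member of B has a common edge with s(x,y) in G
  have hnoconf : ∀ f ∈ B, ∀ u v : V, u ∈ f → v ∈ s(x, y) → G.Adj u v →
      s(u, v) ≠ f → s(u, v) ≠ s(x, y) → False := by
    intro f hf u v hu hv hadj hne_f hne_e
    rcases Sym2.mem_iff.1 hv with hv' | hv' <;> rw [hv'] at hadj hne_f hne_e
    · -- v = x
      by_cases hxf : x ∈ f
      · rcases eq_or_ne u x with rfl | hux
        · exact G.irrefl hadj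
        · exact hne_f ((Sym2.mem_and_mem_iff hux).1 ⟨hu, hxf⟩).symm
      · have hG'uv : G'.Adj u x := (hG'adj u x).2 ⟨hadj, hne_e⟩
        rcases eq_or_ne s(u, x) f₁ with h1 | h1
        · refine hBeop f hf f₂ hf₂.1 (fun hEq => hxf (hEq ▸ hf₂.2))
            ⟨u, x, hu, hf₂.2, hG'uv, hne_f, ?_⟩
          rw [h1]; exact hf12
        · exact hBeop f hf f₁ hf₁.1 (fun hEq => hxf (hEq ▸ hf₁.2))
            ⟨u, x, hu, hf₁.2, hG'uv, hne_f, h1⟩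
    · -- v = y
      by_cases hyf : y ∈ f
      · rcases eq_or_ne u y with rfl | huy
        · exact G.irrefl hadj
        · exact hne_f ((Sym2.mem_and_mem_iff huy).1 ⟨hu, hyf⟩).symm
      · have hG'uv : G'.Adj u y := (hG'adj u y).2 ⟨hadj, hne_e⟩
        rcases eq_or_ne s(u, y) g₁ with h1 | h1
        · refine hBeop f hf g₂ hg₂.1 (fun hEq => hyf (hEq ▸ hg₂.2))
            ⟨u, y, hu, hg₂.2, hG'uv, hne_f, ?_⟩
          rw [h1]; exact hg12
        · exact hBeop f hf g₁ hg₁.1 (fun hEq => hyf (hEq ▸ hg₁.2))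
            ⟨u, y, hu, hg₁.2, hG'uv, hne_f, h1⟩
  have hnoconf' : ∀ f ∈ B, ¬ HasCommonEdge G f s(x, y) ∧ ¬ HasCommonEdge G s(x, y) f := by
    intro f hf
    constructor
    · rintro ⟨u, v, hu, hv, hadj, h1, h2⟩
      exact hnoconf f hf u v hu hv hadj h1 h2
    · rintro ⟨u, v, hu, hv, hadj, h1, h2⟩
      refine hnoconf f hf v u hv hu hadj.symm ?_ ?_
      · rw [Sym2.eq_swap]; exact h2
      · rw [Sym2.eq_swap]; exact h1
  -- insert s(x,y) into By : EOP in G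
  have hEOP1 : IsEOP G (insert s(x, y) By) := by
    constructor
    · rintro f hf
      rcases Set.mem_insert_iff.1 hf with rfl | hf
      · exact he
      · exact (hBmem f hf.1).1
    · intro f hf g hg hfg hcom
      rcases Set.mem_insert_iff.1 hf with rfl | hf
      · rcases Set.mem_insert_iff.1 hg with rfl | hg
        · exact hfg rfl
        · exact (hnoconf' g hg.1).2 hcom
      · rcases Set.mem_insert_iff.1 hg with rfl | hg
        · exact (hnoconf' f hf.1).1 hcom
        · rcases hlift f g hcom with h | ⟨hx', _⟩ | ⟨_, hx'⟩
          · exact hBeop f hf.1 g hg.1 hfg h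
          · exact hnotboth f hf.1 hx' hf.2
          · exact hnotboth g hg.1 hx' hg.2
  -- insert s(x,y) into B \ By : EOP in G
  have hEOP2 : IsEOP G (insert s(x, y) (B \ By)) := by
    constructor
    · rintro f hf
      rcases Set.mem_insert_iff.1 hf with rfl | hf
      · exact he
      · exact (hBmem f hf.1).1
    · intro f hf g hg hfg hcom
      rcases Set.mem_insert_iff.1 hf with rfl | hf
      · rcases Set.mem_insert_iff.1 hg with rfl | hg
        · exact hfg rfl
        · exact (hnoconf' g hg.1).2 hcom
      · rcases Set.mem_insert_iff.1 hg with rfl | hg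
        · exact (hnoconf' f hf.1).1 hcom
        · exact hdiffy.2 f hf g hg hfg hcom
  have hc1 : By.ncard + 1 ≤ eopNum G := by
    have h := ncard_le_eopNum hEOP1
    rwa [Set.ncard_insert_of_notMem (fun h => heB ((Set.sep_subset _ _) h))
      (Set.toFinite By)] at h
  have hc2 : (B \ By).ncard + 1 ≤ eopNum G := by
    have h := ncard_le_eopNum hEOP2
    rwa [Set.ncard_insert_of_notMem (fun h => heB h.1) (Set.toFinite _)] at h
  omega
end

section
/- Let G be a finite simple graph of order n >= 3 with rho_e^o(G) >= 3, and let e be any edge of G. Then rho_e^o(G) - 1 <= rho_e^o(G - e) <= 2*(rho_e^o(G) - 1), where G - e denotes the graph obtained from G by deleting the edge e. -/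
open scoped Classical

variable {V : Type*}

section aux
variable [Fintype V] {G : SimpleGraph V}

lemma bddAbove_eop (G : SimpleGraph V) :
    BddAbove {n | ∃ B : Set (Sym2 V), IsEOP G B ∧ B.ncard = n} := by
  refine ⟨Nat.card (Sym2 V), ?_⟩
  rintro n ⟨B, _, rfl⟩
  rw [← Set.ncard_univ]
  exact Set.ncard_le_ncard (Set.subset_univ B) Set.finite_univ

lemma le_eopNum {B : Set (Sym2 V)} (h : IsEOP G B) : B.ncard ≤ eopNum G :=
  le_csSup (bddAbove_eop G) ⟨B, h, rfl⟩

lemma exists_eop (G : SimpleGraph V) : ∃ B, IsEOP G B ∧ B.ncard = eopNum G := by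
  have h0 : 0 ∈ {n | ∃ B : Set (Sym2 V), IsEOP G B ∧ B.ncard = n} :=
    ⟨∅, ⟨Set.empty_subset _, by simp⟩, by simp⟩
  exact Nat.sSup_mem ⟨0, h0⟩ (bddAbove_eop G)

end aux

section main

variable {G : SimpleGraph V} {u v : V} {B' : Set (Sym2 V)}

lemma eop_diff (huv : G.Adj u v)
    (hB' : IsEOP (G.deleteEdges {s(u,v)}) B') :
    IsEOP G (B' \ {f ∈ B' | u ∈ f}) := by
  have hsub : B' ⊆ G.edgeSet := fun f hf => by
    have := hB'.1 hf; rw [SimpleGraph.edgeSet_deleteEdges] at this; exact this.1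
  refine ⟨fun f hf => hsub hf.1, ?_⟩
  rintro f₁ hf₁ f₂ hf₂ hne ⟨x, y, hx, hy, hadj, h1, h2⟩
  by_cases hxy : s(x,y) = s(u,v)
  · rw [Sym2.eq_iff] at hxy
    rcases hxy with ⟨rfl, rfl⟩ | ⟨rfl, rfl⟩
    · exact hf₁.2 ⟨hf₁.1, hx⟩
    · exact hf₂.2 ⟨hf₂.1, hy⟩
  · exact hB'.2 f₁ hf₁.1 f₂ hf₂.1 hne
      ⟨x, y, hx, hy, SimpleGraph.deleteEdges_adj.2 ⟨hadj, by simpa using hxy⟩, h1, h2⟩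

lemma eop_part (huv : G.Adj u v)
    (hB' : IsEOP (G.deleteEdges {s(u,v)}) B') :
    IsEOP G {f ∈ B' | u ∈ f} := by
  have hsub : B' ⊆ G.edgeSet := fun f hf => by
    have := hB'.1 hf; rw [SimpleGraph.edgeSet_deleteEdges] at this; exact this.1
  have heB' : s(u,v) ∉ B' := fun h => by
    have := hB'.1 h; rw [SimpleGraph.edgeSet_deleteEdges] at this
    exact this.2 rfl
  refine ⟨fun f hf => hsub hf.1, ?_⟩
  rintro f₁ hf₁ f₂ hf₂ hne ⟨x, y, hx, hy, hadj, h1, h2⟩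
  by_cases hxy : s(x,y) = s(u,v)
  · rw [Sym2.eq_iff] at hxy
    rcases hxy with ⟨rfl, rfl⟩ | ⟨rfl, rfl⟩
    · exact heB' ((Sym2.mem_and_mem_iff huv.ne).1 ⟨hf₂.2, hy⟩ ▸ hf₂.1)
    · exact heB' ((Sym2.mem_and_mem_iff huv.ne).1 ⟨hf₁.2, hx⟩ ▸ hf₁.1)
  · exact hB'.2 f₁ hf₁.1 f₂ hf₂.1 hne
      ⟨x, y, hx, hy, SimpleGraph.deleteEdges_adj.2 ⟨hadj, by simpa using hxy⟩, h1, h2⟩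

/-- core case analysis: if two distinct members of `B'` contain `u`, then no `e₁ ∈ B'` has a
common edge with `e = s(u,v)` realized through the endpoint `u` of `e`. -/
lemma no_common_aux (huv : G.Adj u v)
    (hB' : IsEOP (G.deleteEdges {s(u,v)}) B')
    (h2 : 2 ≤ {f ∈ B' | u ∈ f}.ncard)
    {e₁ : Sym2 V} (he₁ : e₁ ∈ B') {x : V} (hx : x ∈ e₁)
    (hadj : G.Adj x u) (hne : s(x,u) ≠ e₁) (hge : s(x,u) ≠ s(u,v)) : False := by
  by_cases hu : u ∈ e₁
  · exact hne ((Sym2.mem_and_mem_iff hadj.ne).1 ⟨hx, hu⟩).symm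
  · obtain ⟨f, hf, hfne⟩ := Set.exists_ne_of_one_lt_ncard (s := {f ∈ B' | u ∈ f}) (by omega) s(x,u)
    have hfe₁ : f ≠ e₁ := fun h => hu (h ▸ hf.2)
    exact hB'.2 e₁ he₁ f hf.1 hfe₁.symm
      ⟨x, u, hx, hf.2, SimpleGraph.deleteEdges_adj.2 ⟨hadj, by simpa using hge⟩,
        hne, hfne.symm⟩

lemma no_common (huv : G.Adj u v)
    (hB' : IsEOP (G.deleteEdges {s(u,v)}) B')
    (h2u : 2 ≤ {f ∈ B' | u ∈ f}.ncard) (h2v : 2 ≤ {f ∈ B' | v ∈ f}.ncard)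
    {e₁ : Sym2 V} (he₁ : e₁ ∈ B') :
    ¬ HasCommonEdge G e₁ s(u,v) ∧ ¬ HasCommonEdge G s(u,v) e₁ := by
  have hB's : IsEOP (G.deleteEdges {s(v,u)}) B' := by rwa [Sym2.eq_swap]
  constructor
  · rintro ⟨x, y, hx, hy, hadj, h1, h2⟩
    rw [Sym2.mem_iff] at hy
    rcases hy with rfl | rfl
    · exact no_common_aux huv hB' h2u he₁ hx hadj h1 h2
    · exact no_common_aux huv.symm hB's h2v he₁ hx hadj h1
        (fun h => h2 (h.trans Sym2.eq_swap))
  · rintro ⟨x, y, hx, hy, hadj, h1, h2⟩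
    rw [Sym2.mem_iff] at hx
    rcases hx with rfl | rfl
    · exact no_common_aux huv hB' h2u he₁ hy hadj.symm
        (fun h => h2 (Sym2.eq_swap.trans h)) (fun h => h1 (Sym2.eq_swap.trans h))
    · exact no_common_aux huv.symm hB's h2v he₁ hy hadj.symm
        (fun h => h2 (Sym2.eq_swap.trans h))
        (fun h => h1 (Sym2.eq_swap.trans (h.trans Sym2.eq_swap)))

lemma eop_insert (huv : G.Adj u v)
    (hB' : IsEOP (G.deleteEdges {s(u,v)}) B')
    (h2u : 2 ≤ {f ∈ B' | u ∈ f}.ncard) (h2v : 2 ≤ {f ∈ B' | v ∈ f}.ncard)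
    {C : Set (Sym2 V)} (hCB' : C ⊆ B') (hC : IsEOP G C) :
    IsEOP G (insert s(u,v) C) := by
  refine ⟨?_, ?_⟩
  · rintro f (rfl | hf)
    · exact huv
    · exact hC.1 hf
  · rintro f₁ (rfl | hf₁) f₂ (rfl | hf₂) hne hcom
    · exact hne rfl
    · exact (no_common huv hB' h2u h2v (hCB' hf₂)).2 hcom
    · exact (no_common huv hB' h2u h2v (hCB' hf₁)).1 hcom
    · exact hC.2 f₁ hf₁ f₂ hf₂ hne hcom

end main

theorem stmt7 [Fintype V] (G : SimpleGraph V) (hn : 3 ≤ Fintype.card V)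
    (h3 : 3 ≤ eopNum G) (e : Sym2 V) (he : e ∈ G.edgeSet) :
    eopNum G - 1 ≤ eopNum (G.deleteEdges {e}) ∧
    eopNum (G.deleteEdges {e}) ≤ 2 * (eopNum G - 1) := by
  induction e with
  | h u v =>
  rw [SimpleGraph.mem_edgeSet] at he
  obtain ⟨B, hB, hBcard⟩ := exists_eop G
  obtain ⟨B', hB', hB'card⟩ := exists_eop (G.deleteEdges {s(u,v)})
  constructor
  · -- lower bound
    have hD : IsEOP (G.deleteEdges {s(u,v)}) (B \ {s(u,v)}) := by
      refine ⟨?_, ?_⟩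
      · intro f hf
        rw [SimpleGraph.edgeSet_deleteEdges]
        exact ⟨hB.1 hf.1, hf.2⟩
      · rintro f₁ hf₁ f₂ hf₂ hne ⟨x, y, hx, hy, hadj, h1, h2⟩
        exact hB.2 f₁ hf₁.1 f₂ hf₂.1 hne
          ⟨x, y, hx, hy, (SimpleGraph.deleteEdges_adj.1 hadj).1, h1, h2⟩
    have h1 : (B \ {s(u,v)}).ncard ≤ eopNum (G.deleteEdges {s(u,v)}) := le_eopNum hD
    have h2 : B.ncard ≤ (B \ {s(u,v)}).ncard + 1 := by
      calc B.ncard ≤ (insert s(u,v) (B \ {s(u,v)})).ncard :=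
            Set.ncard_le_ncard (by intro f hf; by_cases h : f = s(u,v) <;> simp [h, hf])
              (Set.toFinite _)
        _ ≤ (B \ {s(u,v)}).ncard + 1 := Set.ncard_insert_le _ _
    omega
  · -- upper bound
    set Bu := {f ∈ B' | u ∈ f} with hBu
    set Bv := {f ∈ B' | v ∈ f} with hBv
    have heB' : s(u,v) ∉ B' := fun h => by
      have := hB'.1 h; rw [SimpleGraph.edgeSet_deleteEdges] at this
      exact this.2 rfl
    have hBuB' : Bu ⊆ B' := fun f hf => hf.1
    have hdiff : (B' \ Bu).ncard = B'.ncard - Bu.ncard :=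
      Set.ncard_diff hBuB' (Set.toFinite _)
    have hle : Bu.ncard ≤ B'.ncard := Set.ncard_le_ncard hBuB' (Set.toFinite _)
    have hBvs : Bv = {f ∈ B' | v ∈ f} := hBv
    have hdiffEOP : IsEOP G (B' \ Bu) := eop_diff he hB'
    have hBuEOP : IsEOP G Bu := eop_part he hB'
    by_cases hcase : 2 ≤ Bu.ncard ∧ 2 ≤ Bv.ncard
    · have hins1 : IsEOP G (insert s(u,v) Bu) :=
        eop_insert he hB' hcase.1 hcase.2 hBuB' hBuEOP
      have hins2 : IsEOP G (insert s(u,v) (B' \ Bu)) :=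
        eop_insert he hB' hcase.1 hcase.2 Set.diff_subset hdiffEOP
      have hc1 : Bu.ncard + 1 ≤ eopNum G := by
        have := le_eopNum hins1
        rwa [Set.ncard_insert_of_notMem (fun h => heB' (hBuB' h)) (Set.toFinite _)] at this
      have hc2 : (B' \ Bu).ncard + 1 ≤ eopNum G := by
        have := le_eopNum hins2
        rwa [Set.ncard_insert_of_notMem (fun h => heB' h.1) (Set.toFinite _)] at this
      omega
    · rw [not_and_or] at hcase
      have hBvB' : Bv ⊆ B' := fun f hf => hf.1
      have hdiffv : (B' \ Bv).ncard = B'.ncard - Bv.ncard :=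
        Set.ncard_diff hBvB' (Set.toFinite _)
      have hlev : Bv.ncard ≤ B'.ncard := Set.ncard_le_ncard hBvB' (Set.toFinite _)
      have hdiffEOPv : IsEOP G (B' \ Bv) := by
        have := eop_diff he.symm (by rwa [Sym2.eq_swap])
        have hswap : {f ∈ B' | v ∈ f} = Bv := hBvs.symm
        rwa [hswap] at this
      rcases hcase with h | h
      · have := le_eopNum hdiffEOP
        omega
      · have := le_eopNum hdiffEOPv
        omega
end

section
/- For all integers b >= 3 and a with b - 1 <= a <= 2b - 2, there exists a finite connected simple graph G and an edge e of G such that rho_e^o(G) = b and rho_e^o(G - e) = a. -/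
open scoped Classical

variable {V : Type*}

lemma eopNum_eq (G : SimpleGraph V) (k : ℕ)
    (h1 : ∃ B, IsEOP G B ∧ B.ncard = k)
    (h2 : ∀ B, IsEOP G B → B.ncard ≤ k) : eopNum G = k := by
  obtain ⟨B, hB, hBk⟩ := h1
  apply le_antisymm
  · exact csSup_le ⟨k, B, hB, hBk⟩ (by rintro m ⟨C, hC, rfl⟩; exact h2 C hC)
  · exact le_csSup ⟨k, by rintro m ⟨C, hC, rfl⟩; exact h2 C hC⟩ ⟨B, hB, hBk⟩

lemma hce_symm (G : SimpleGraph V) {e₁ e₂ : Sym2 V}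
    (h : HasCommonEdge G e₁ e₂) : HasCommonEdge G e₂ e₁ := by
  obtain ⟨x, y, hx, hy, hadj, h1, h2⟩ := h
  exact ⟨y, x, hy, hx, hadj.symm, by rwa [Sym2.eq_swap], by rwa [Sym2.eq_swap]⟩

lemma hce_del (G : SimpleGraph V) (s : Set (Sym2 V)) {e₁ e₂ : Sym2 V}
    (h : HasCommonEdge (G.deleteEdges s) e₁ e₂) : HasCommonEdge G e₁ e₂ := by
  obtain ⟨x, y, hx, hy, hadj, h1, h2⟩ := h
  exact ⟨x, y, hx, hy, (SimpleGraph.deleteEdges_adj.1 hadj).1, h1, h2⟩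

namespace EOPAux

variable (p q : ℕ)

def v0 : Fin (p+q+2) := ⟨0, by omega⟩
def v1 : Fin (p+q+2) := ⟨1, by omega⟩

def dsRel (x y : Fin (p+q+2)) : Prop :=
  (x.val = 0 ∧ 2 ≤ y.val ∧ y.val < p + 2) ∨ (x.val = 1 ∧ p + 2 ≤ y.val) ∨
  (x.val = 0 ∧ y.val = 1)

def DS : SimpleGraph (Fin (p+q+2)) := SimpleGraph.fromRel (dsRel p q)

lemma DS_adj {x y : Fin (p+q+2)} :
    (DS p q).Adj x y ↔ x.val ≠ y.val ∧ (dsRel p q x y ∨ dsRel p q y x) := by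
  rw [DS, SimpleGraph.fromRel_adj, ne_eq, Fin.ext_iff]

def fA (k : Fin p) : Sym2 (Fin (p+q+2)) := s(v0 p q, ⟨k.val + 2, by omega⟩)
def fC (k : Fin q) : Sym2 (Fin (p+q+2)) := s(v1 p q, ⟨p + 2 + k.val, by omega⟩)
def eDS : Sym2 (Fin (p+q+2)) := s(v0 p q, v1 p q)

lemma mem_SA {e' : Sym2 (Fin (p+q+2))} :
    e' ∈ Set.range (fA p q) ↔
      ∃ w : Fin (p+q+2), 2 ≤ w.val ∧ w.val < p + 2 ∧ e' = s(v0 p q, w) := by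
  constructor
  · rintro ⟨k, rfl⟩
    exact ⟨⟨k.val + 2, by omega⟩, Nat.le_add_left 2 k.val,
      Nat.add_lt_add_right k.isLt 2, rfl⟩
  · rintro ⟨w, hw1, hw2, rfl⟩
    refine ⟨⟨w.val - 2, by omega⟩, ?_⟩
    simp only [fA]
    rw [Sym2.eq_iff]
    exact Or.inl ⟨rfl, Fin.ext (show w.val - 2 + 2 = w.val by omega)⟩

lemma mem_SC {e' : Sym2 (Fin (p+q+2))} :
    e' ∈ Set.range (fC p q) ↔ ∃ w : Fin (p+q+2), p + 2 ≤ w.val ∧ e' = s(v1 p q, w) := by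
  constructor
  · rintro ⟨k, rfl⟩
    exact ⟨⟨p + 2 + k.val, by omega⟩, Nat.le_add_right (p+2) k.val, rfl⟩
  · rintro ⟨w, hw1, rfl⟩
    refine ⟨⟨w.val - (p+2), by omega⟩, ?_⟩
    simp only [fC]
    rw [Sym2.eq_iff]
    exact Or.inl ⟨rfl, Fin.ext (show p + 2 + (w.val - (p+2)) = w.val by omega)⟩

lemma DS_edgeSet_subset :
    (DS p q).edgeSet ⊆ Set.range (fA p q) ∪ Set.range (fC p q) ∪ {eDS p q} := by
  have key : ∀ x y : Fin (p+q+2), dsRel p q x y →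
      s(x, y) ∈ Set.range (fA p q) ∪ Set.range (fC p q) ∪ {eDS p q} := by
    intro x y h
    rcases h with ⟨h0, h1, h2⟩ | ⟨h0, h1⟩ | ⟨h0, h1⟩
    · exact Or.inl <| Or.inl <| (mem_SA p q).2
        ⟨y, h1, h2, by rw [show x = v0 p q from Fin.ext h0]⟩
    · exact Or.inl <| Or.inr <| (mem_SC p q).2
        ⟨y, h1, by rw [show x = v1 p q from Fin.ext h0]⟩
    · have hx : x = v0 p q := Fin.ext h0
      have hy : y = v1 p q := Fin.ext h1
      exact Or.inr (by rw [hx, hy]; rfl)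
  intro e' he'
  induction e' using Sym2.ind with
  | _ x y =>
    rw [SimpleGraph.mem_edgeSet, DS_adj] at he'
    rcases he'.2 with h | h
    · exact key x y h
    · rw [Sym2.eq_swap]; exact key y x h

lemma mem_edgeSet_of_dsRel {x y : Fin (p+q+2)} (h : dsRel p q x y) :
    s(x, y) ∈ (DS p q).edgeSet := by
  rw [SimpleGraph.mem_edgeSet, DS_adj]
  refine ⟨?_, Or.inl h⟩
  rcases h with ⟨h0, h1, h2⟩ | ⟨h0, h1⟩ | ⟨h0, h1⟩ <;> omega

-- no common edge among edges all of the form s(v0, w), 1 ≤ w.val ≤ p+1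
lemma noCE_A {e₁ e₂ : Sym2 (Fin (p+q+2))} {w₁ w₂ : Fin (p+q+2)}
    (hw₁ : 1 ≤ w₁.val ∧ w₁.val < p + 2) (hw₂ : 1 ≤ w₂.val ∧ w₂.val < p + 2)
    (he₁ : e₁ = s(v0 p q, w₁)) (he₂ : e₂ = s(v0 p q, w₂)) :
    ¬ HasCommonEdge (DS p q) e₁ e₂ := by
  rintro ⟨x, y, hx, hy, hadj, hn1, hn2⟩
  subst he₁ he₂
  rw [Sym2.mem_iff] at hx hy
  rcases hx with rfl | rfl <;> rcases hy with rfl | rfl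
  · exact hadj.ne rfl
  · exact hn2 rfl
  · exact hn1 (Sym2.eq_swap)
  · rw [DS_adj] at hadj
    rcases hadj.2 with h | h <;>
    · rcases h with ⟨h0, h1, h2⟩ | ⟨h0, h1⟩ | ⟨h0, h1⟩ <;> omega

lemma noCE_C {e₁ e₂ : Sym2 (Fin (p+q+2))} {w₁ w₂ : Fin (p+q+2)}
    (hw₁ : p + 2 ≤ w₁.val) (hw₂ : p + 2 ≤ w₂.val)
    (he₁ : e₁ = s(v1 p q, w₁)) (he₂ : e₂ = s(v1 p q, w₂)) :
    ¬ HasCommonEdge (DS p q) e₁ e₂ := by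
  rintro ⟨x, y, hx, hy, hadj, hn1, hn2⟩
  subst he₁ he₂
  rw [Sym2.mem_iff] at hx hy
  rcases hx with rfl | rfl <;> rcases hy with rfl | rfl
  · exact hadj.ne rfl
  · exact hn2 rfl
  · exact hn1 (Sym2.eq_swap)
  · rw [DS_adj] at hadj
    have hv1 : (v1 p q).val = 1 := rfl
    rcases hadj.2 with h | h <;>
    · rcases h with ⟨h0, h1, h2⟩ | ⟨h0, h1⟩ | ⟨h0, h1⟩ <;> omega

lemma noCE_AC_del {e₁ e₂ : Sym2 (Fin (p+q+2))} {w₁ w₂ : Fin (p+q+2)}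
    (hw₁ : 2 ≤ w₁.val ∧ w₁.val < p + 2) (hw₂ : p + 2 ≤ w₂.val)
    (he₁ : e₁ = s(v0 p q, w₁)) (he₂ : e₂ = s(v1 p q, w₂)) :
    ¬ HasCommonEdge ((DS p q).deleteEdges {eDS p q}) e₁ e₂ := by
  rintro ⟨x, y, hx, hy, hadj, hn1, hn2⟩
  subst he₁ he₂
  rw [Sym2.mem_iff] at hx hy
  rw [SimpleGraph.deleteEdges_adj] at hadj
  have hv0 : (v0 p q).val = 0 := rfl
  have hv1 : (v1 p q).val = 1 := rfl
  rcases hx with rfl | rfl <;> rcases hy with rfl | rfl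
  · exact hadj.2 rfl
  · rw [DS_adj] at hadj
    rcases hadj.1.2 with h | h <;>
    · rcases h with ⟨h0, h1, h2⟩ | ⟨h0, h1⟩ | ⟨h0, h1⟩ <;> omega
  · rw [DS_adj] at hadj
    rcases hadj.1.2 with h | h <;>
    · rcases h with ⟨h0, h1, h2⟩ | ⟨h0, h1⟩ | ⟨h0, h1⟩ <;> omega
  · rw [DS_adj] at hadj
    rcases hadj.1.2 with h | h <;>
    · rcases h with ⟨h0, h1, h2⟩ | ⟨h0, h1⟩ | ⟨h0, h1⟩ <;> omega

lemma SA_ncard : (Set.range (fA p q)).ncard = p := by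
  have hinj : Function.Injective (fA p q) := by
    intro k k' h
    simp only [fA, Sym2.eq_iff] at h
    rcases h with ⟨-, h⟩ | ⟨h, -⟩
    · have h' : k.val + 2 = k'.val + 2 := congrArg Fin.val h
      exact Fin.ext (by omega)
    · have h' : (0 : ℕ) = k'.val + 2 := congrArg Fin.val h
      omega
  rw [← Set.image_univ, Set.ncard_image_of_injective _ hinj, Set.ncard_univ,
    Nat.card_eq_fintype_card, Fintype.card_fin]

lemma SC_ncard : (Set.range (fC p q)).ncard = q := by
  have hinj : Function.Injective (fC p q) := by
    intro k k' h
    simp only [fC, Sym2.eq_iff] at h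
    rcases h with ⟨-, h⟩ | ⟨h, -⟩
    · have h' : p + 2 + k.val = p + 2 + k'.val := congrArg Fin.val h
      exact Fin.ext (by omega)
    · have h' : (1 : ℕ) = p + 2 + k'.val := congrArg Fin.val h
      omega
  rw [← Set.image_univ, Set.ncard_image_of_injective _ hinj, Set.ncard_univ,
    Nat.card_eq_fintype_card, Fintype.card_fin]

lemma eDS_notMem_SA : eDS p q ∉ Set.range (fA p q) := by
  rw [mem_SA]
  rintro ⟨w, hw1, hw2, hw⟩
  rw [eDS, Sym2.eq_iff] at hw
  have hv1 : (v1 p q).val = 1 := rfl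
  have hv0 : (v0 p q).val = 0 := rfl
  rcases hw with ⟨-, h⟩ | ⟨h, -⟩
  · have h' : (1 : ℕ) = w.val := congrArg Fin.val h
    omega
  · have h' : (0 : ℕ) = w.val := congrArg Fin.val h
    omega

lemma eDS_notMem_SC : eDS p q ∉ Set.range (fC p q) := by
  rw [mem_SC]
  rintro ⟨w, hw1, hw⟩
  rw [eDS, Sym2.eq_iff] at hw
  have hv1 : (v1 p q).val = 1 := rfl
  have hv0 : (v0 p q).val = 0 := rfl
  rcases hw with ⟨h, -⟩ | ⟨h, -⟩
  · have h' : (0 : ℕ) = (1 : ℕ) := congrArg Fin.val h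
    omega
  · have h' : (0 : ℕ) = w.val := congrArg Fin.val h
    omega

lemma SA_disj_SC : Disjoint (Set.range (fA p q)) (Set.range (fC p q)) := by
  rw [Set.disjoint_left]
  intro e' h1 h2
  rw [mem_SA] at h1; rw [mem_SC] at h2
  obtain ⟨w, hw1, hw2, rfl⟩ := h1
  obtain ⟨w', hw', hw⟩ := h2
  rw [Sym2.eq_iff] at hw
  have hv1 : (v1 p q).val = 1 := rfl
  have hv0 : (v0 p q).val = 0 := rfl
  rcases hw with ⟨h, h'⟩ | ⟨h, h'⟩
  · have h'' : (0 : ℕ) = 1 := congrArg Fin.val h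
    omega
  · have a1 : (0 : ℕ) = w'.val := congrArg Fin.val h
    omega

lemma eop_G : IsEOP (DS p q) (insert (eDS p q) (Set.range (fA p q))) := by
  constructor
  · rintro e' (rfl | he')
    · exact mem_edgeSet_of_dsRel p q (Or.inr (Or.inr ⟨rfl, rfl⟩))
    · obtain ⟨w, hw1, hw2, rfl⟩ := (mem_SA p q).1 he'
      exact mem_edgeSet_of_dsRel p q (Or.inl ⟨rfl, hw1, hw2⟩)
  · have canon : ∀ e' ∈ insert (eDS p q) (Set.range (fA p q)),
        ∃ w : Fin (p+q+2), (1 ≤ w.val ∧ w.val < p + 2) ∧ e' = s(v0 p q, w) := by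
      rintro e' (rfl | he')
      · refine ⟨v1 p q, ⟨?_, ?_⟩, rfl⟩
        · exact le_refl 1
        · show (1 : ℕ) < p + 2
          omega
      · obtain ⟨w, hw1, hw2, rfl⟩ := (mem_SA p q).1 he'
        exact ⟨w, ⟨by omega, hw2⟩, rfl⟩
    intro e₁ h₁ e₂ h₂ hne
    obtain ⟨w₁, hw₁, he₁⟩ := canon e₁ h₁
    obtain ⟨w₂, hw₂, he₂⟩ := canon e₂ h₂
    exact noCE_A p q hw₁ hw₂ he₁ he₂

lemma eop_Gdel :
    IsEOP ((DS p q).deleteEdges {eDS p q}) (Set.range (fA p q) ∪ Set.range (fC p q)) := by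
  constructor
  · intro e' he'
    rw [SimpleGraph.edgeSet_deleteEdges, Set.mem_diff]
    rcases he' with he' | he'
    · obtain ⟨w, hw1, hw2, rfl⟩ := (mem_SA p q).1 he'
      refine ⟨mem_edgeSet_of_dsRel p q (Or.inl ⟨rfl, hw1, hw2⟩), ?_⟩
      exact fun h => eDS_notMem_SA p q (h ▸ he')
    · obtain ⟨w, hw1, rfl⟩ := (mem_SC p q).1 he'
      refine ⟨mem_edgeSet_of_dsRel p q (Or.inr (Or.inl ⟨rfl, hw1⟩)), ?_⟩
      exact fun h => eDS_notMem_SC p q (h ▸ he')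
  · intro e₁ h₁ e₂ h₂ hne hce
    rcases h₁ with h₁ | h₁ <;> rcases h₂ with h₂ | h₂
    · obtain ⟨w₁, ha1, ha2, he₁⟩ := (mem_SA p q).1 h₁
      obtain ⟨w₂, hb1, hb2, he₂⟩ := (mem_SA p q).1 h₂
      exact noCE_A p q ⟨by omega, ha2⟩ ⟨by omega, hb2⟩ he₁ he₂ (hce_del _ _ hce)
    · obtain ⟨w₁, ha1, ha2, he₁⟩ := (mem_SA p q).1 h₁
      obtain ⟨w₂, hb1, he₂⟩ := (mem_SC p q).1 h₂
      exact noCE_AC_del p q ⟨ha1, ha2⟩ hb1 he₁ he₂ hce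
    · obtain ⟨w₁, ha1, he₁⟩ := (mem_SC p q).1 h₁
      obtain ⟨w₂, hb1, hb2, he₂⟩ := (mem_SA p q).1 h₂
      exact noCE_AC_del p q ⟨hb1, hb2⟩ ha1 he₂ he₁ (hce_symm _ hce)
    · obtain ⟨w₁, ha1, he₁⟩ := (mem_SC p q).1 h₁
      obtain ⟨w₂, hb1, he₂⟩ := (mem_SC p q).1 h₂
      exact noCE_C p q ha1 hb1 he₁ he₂ (hce_del _ _ hce)

lemma upper_G (hq : q ≤ p) (B : Set (Sym2 (Fin (p+q+2)))) (hB : IsEOP (DS p q) B) :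
    B.ncard ≤ p + 1 := by
  by_cases h : ∃ e₁ ∈ B, e₁ ∈ Set.range (fA p q)
  · obtain ⟨e₁, he₁B, he₁⟩ := h
    obtain ⟨w₁, hw1, hw2, he₁'⟩ := (mem_SA p q).1 he₁
    have hsub : B ⊆ insert (eDS p q) (Set.range (fA p q)) := by
      intro e₂ he₂B
      rcases DS_edgeSet_subset p q (hB.1 he₂B) with (h2 | h2) | h2
      · exact Set.mem_insert_of_mem _ h2
      · exfalso
        obtain ⟨w₂, hb1, he₂'⟩ := (mem_SC p q).1 h2
        have hne : e₁ ≠ e₂ := by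
          intro hcon
          rw [he₁', he₂', Sym2.eq_iff] at hcon
          rcases hcon with ⟨h', -⟩ | ⟨h', -⟩
          · have h'' : (0 : ℕ) = 1 := congrArg Fin.val h'
            omega
          · have h'' : (0 : ℕ) = w₂.val := congrArg Fin.val h'
            omega
        refine hB.2 e₁ he₁B e₂ he₂B hne ⟨v0 p q, v1 p q, ?_, ?_, ?_, ?_, ?_⟩
        · rw [he₁']; exact Sym2.mem_mk_left _ _
        · rw [he₂']; exact Sym2.mem_mk_left _ _
        · rw [DS_adj]
          exact ⟨(by omega : (0:ℕ) ≠ 1), Or.inl (Or.inr (Or.inr ⟨rfl, rfl⟩))⟩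
        · intro hcon
          rw [he₁', Sym2.eq_iff] at hcon
          rcases hcon with ⟨-, h'⟩ | ⟨h', -⟩
          · have h'' : (1 : ℕ) = w₁.val := congrArg Fin.val h'
            omega
          · have h'' : (0 : ℕ) = w₁.val := congrArg Fin.val h'
            omega
        · intro hcon
          rw [he₂', Sym2.eq_iff] at hcon
          rcases hcon with ⟨h', -⟩ | ⟨h', -⟩
          · have h'' : (0 : ℕ) = 1 := congrArg Fin.val h'
            omega
          · have h'' : (0 : ℕ) = w₂.val := congrArg Fin.val h'
            omega
      · exact h2 ▸ Set.mem_insert _ _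
    calc B.ncard ≤ (insert (eDS p q) (Set.range (fA p q))).ncard :=
          Set.ncard_le_ncard hsub (Set.toFinite _)
      _ = p + 1 := by rw [Set.ncard_insert_of_notMem (eDS_notMem_SA p q), SA_ncard]
  · push_neg at h
    have hsub : B ⊆ insert (eDS p q) (Set.range (fC p q)) := by
      intro e₂ he₂B
      rcases DS_edgeSet_subset p q (hB.1 he₂B) with (h2 | h2) | h2
      · exact absurd h2 (h e₂ he₂B)
      · exact Set.mem_insert_of_mem _ h2
      · exact h2 ▸ Set.mem_insert _ _
    calc B.ncard ≤ (insert (eDS p q) (Set.range (fC p q))).ncard :=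
          Set.ncard_le_ncard hsub (Set.toFinite _)
      _ = q + 1 := by rw [Set.ncard_insert_of_notMem (eDS_notMem_SC p q), SC_ncard]
      _ ≤ p + 1 := by omega

lemma upper_Gdel (B : Set (Sym2 (Fin (p+q+2))))
    (hB : IsEOP ((DS p q).deleteEdges {eDS p q}) B) : B.ncard ≤ p + q := by
  have hsub : B ⊆ Set.range (fA p q) ∪ Set.range (fC p q) := by
    intro e' he'
    have := hB.1 he'
    rw [SimpleGraph.edgeSet_deleteEdges, Set.mem_diff] at this
    rcases DS_edgeSet_subset p q this.1 with h2 | h2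
    · exact h2
    · exact absurd h2 this.2
  calc B.ncard ≤ (Set.range (fA p q) ∪ Set.range (fC p q)).ncard :=
        Set.ncard_le_ncard hsub (Set.toFinite _)
    _ = p + q := by
        rw [Set.ncard_union_eq (SA_disj_SC p q), SA_ncard, SC_ncard]

lemma DS_connected : (DS p q).Connected := by
  have hadj01 : (DS p q).Adj (v0 p q) (v1 p q) := by
    rw [DS_adj]; exact ⟨(by omega : (0:ℕ) ≠ 1), Or.inl (Or.inr (Or.inr ⟨rfl, rfl⟩))⟩
  have hreach : ∀ x : Fin (p+q+2), (DS p q).Reachable x (v0 p q) := by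
    intro x
    rcases Nat.lt_or_ge x.val 2 with hx | hx
    · rcases Nat.lt_or_ge x.val 1 with hx1 | hx1
      · have : x = v0 p q := Fin.ext (show x.val = 0 by omega)
        rw [this]
      · have : x = v1 p q := Fin.ext (show x.val = 1 by omega)
        rw [this]; exact hadj01.symm.reachable
    · rcases Nat.lt_or_ge x.val (p+2) with hx2 | hx2
      · have : (DS p q).Adj (v0 p q) x := by
          rw [DS_adj]; exact ⟨(show (0:ℕ) ≠ x.val by omega), Or.inl (Or.inl ⟨rfl, hx, hx2⟩)⟩
        exact this.symm.reachable
      · have h1 : (DS p q).Adj (v1 p q) x := by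
          rw [DS_adj]; exact ⟨(show (1:ℕ) ≠ x.val by omega), Or.inl (Or.inr (Or.inl ⟨rfl, hx2⟩))⟩
        exact (h1.symm.reachable).trans hadj01.symm.reachable
  haveI : Nonempty (Fin (p+q+2)) := ⟨v0 p q⟩
  exact ⟨fun x y => (hreach x).trans (hreach y).symm⟩

end EOPAux


open EOPAux in
theorem stmt8 (b a : ℕ) (hb : 3 ≤ b) (h1 : b - 1 ≤ a) (h2 : a ≤ 2 * b - 2) :
    ∃ (n : ℕ) (G : SimpleGraph (Fin n)) (e : Sym2 (Fin n)),
      G.Connected ∧ e ∈ G.edgeSet ∧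
      eopNum G = b ∧ eopNum (G.deleteEdges {e}) = a := by
  set p := b - 1 with hp
  set q := a - (b - 1) with hq
  have hqp : q ≤ p := by omega
  have hpq : p + q = a := by omega
  have hpb : p + 1 = b := by omega
  refine ⟨p + q + 2, DS p q, eDS p q, DS_connected p q,
    mem_edgeSet_of_dsRel p q (Or.inr (Or.inr ⟨rfl, rfl⟩)), ?_, ?_⟩
  · rw [← hpb]
    refine eopNum_eq _ _ ⟨_, eop_G p q, ?_⟩ (upper_G p q hqp)
    rw [Set.ncard_insert_of_notMem (eDS_notMem_SA p q), SA_ncard]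
  · rw [← hpq]
    refine eopNum_eq _ _ ⟨_, eop_Gdel p q, ?_⟩ (upper_Gdel p q)
    rw [Set.ncard_union_eq (SA_disj_SC p q), SA_ncard, SC_ncard]
end

section
/- For every integer n >= 3 and every edge e of the complete graph K_n, rho_e^o(K_n - e) = 2 = rho_e^o(K_n) + 1. -/
open scoped Classical

variable {V : Type*}

lemma sym2_ne_of {a b c d : V} (h : ¬((a = c ∧ b = d) ∨ (a = d ∧ b = c))) :
    s(a,b) ≠ s(c,d) := fun hh => h (Sym2.eq_iff.mp hh)

lemma core_aux (e : Sym2 V) (u x y : V) (hux : u ≠ x) (huy : u ≠ y) (hxy : x ≠ y)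
    (h : ¬ HasCommonEdge ((⊤ : SimpleGraph V).deleteEdges {e}) s(u,x) s(u,y)) :
    e = s(x,y) := by
  by_contra hne
  refine h ⟨x, y, by simp, by simp, ?_, ?_, ?_⟩
  · rw [SimpleGraph.deleteEdges_adj]
    exact ⟨(SimpleGraph.top_adj _ _).mpr hxy, by simpa using fun hh => hne hh.symm⟩
  · exact sym2_ne_of (by rintro (⟨h1, h2⟩ | ⟨h1, h2⟩) <;> simp_all)
  · exact sym2_ne_of (by rintro (⟨h1, h2⟩ | ⟨h1, h2⟩) <;> simp_all)

/-- structure of a pair of edges with no common edge in `K - e` -/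
lemma pair_struct (e f g : Sym2 V)
    (hf : f ∈ ((⊤ : SimpleGraph V).deleteEdges {e}).edgeSet)
    (hg : g ∈ ((⊤ : SimpleGraph V).deleteEdges {e}).edgeSet)
    (hfg : f ≠ g)
    (h : ¬ HasCommonEdge ((⊤ : SimpleGraph V).deleteEdges {e}) f g) :
    ∃ u a b, u ≠ a ∧ u ≠ b ∧ a ≠ b ∧ e = s(a,b) ∧ f = s(u,a) ∧ g = s(u,b) := by
  obtain ⟨x1, x2, rfl⟩ : ∃ a b, f = s(a,b) := by
    induction f using Sym2.ind with | _ x y => exact ⟨x, y, rfl⟩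
  obtain ⟨y1, y2, rfl⟩ : ∃ a b, g = s(a,b) := by
    induction g using Sym2.ind with | _ x y => exact ⟨x, y, rfl⟩
  rw [SimpleGraph.mem_edgeSet, SimpleGraph.deleteEdges_adj] at hf hg
  obtain ⟨hx12, hfe⟩ := hf
  obtain ⟨hy12, hge⟩ := hg
  simp only [SimpleGraph.top_adj, Set.mem_singleton_iff] at hx12 hy12 hfe hge
  by_cases hsh : x1 = y1 ∨ x1 = y2 ∨ x2 = y1 ∨ x2 = y2
  · rcases hsh with rfl | rfl | rfl | rfl
    · have hxy : x2 ≠ y2 := fun hh => hfg (by rw [hh])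
      exact ⟨x1, x2, y2, hx12, hy12, hxy, core_aux e x1 x2 y2 hx12 hy12 hxy h, rfl, rfl⟩
    · -- y2 := x1
      have hxy : x2 ≠ y1 := fun hh => hfg (by rw [hh, Sym2.eq_swap])
      refine ⟨x1, x2, y1, hx12, Ne.symm hy12, hxy,
        core_aux e x1 x2 y1 hx12 (Ne.symm hy12) hxy ?_, rfl, Sym2.eq_swap.symm⟩
      rw [Sym2.eq_swap (a := y1) (b := x1)] at h
      exact h
    · -- y1 := x2
      have hxy : x1 ≠ y2 := fun hh => hfg (by rw [hh, Sym2.eq_swap])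
      refine ⟨x2, x1, y2, Ne.symm hx12, hy12, hxy,
        core_aux e x2 x1 y2 (Ne.symm hx12) hy12 hxy ?_, Sym2.eq_swap.symm, rfl⟩
      rw [Sym2.eq_swap (a := x2) (b := x1)]
      exact h
    · -- y2 := x2
      have hxy : x1 ≠ y1 := fun hh => hfg (by rw [hh])
      refine ⟨x2, x1, y1, Ne.symm hx12, Ne.symm hy12, hxy,
        core_aux e x2 x1 y1 (Ne.symm hx12) (Ne.symm hy12) hxy ?_,
        Sym2.eq_swap.symm, Sym2.eq_swap.symm⟩
      rw [Sym2.eq_swap (a := x2) (b := x1), Sym2.eq_swap (a := x2) (b := y1)]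
      exact h
  · push_neg at hsh
    obtain ⟨h11, h12, h21, h22⟩ := hsh
    exfalso
    by_cases he1 : s(x1, y1) = e
    · have he2 : s(x2, y2) ≠ e := by
        rw [← he1]
        exact sym2_ne_of (by rintro (⟨h1, h2⟩ | ⟨h1, h2⟩) <;> simp_all)
      refine h ⟨x2, y2, by simp, by simp, ?_, ?_, ?_⟩
      · rw [SimpleGraph.deleteEdges_adj]
        exact ⟨(SimpleGraph.top_adj _ _).mpr h22, by simpa using he2⟩
      · exact sym2_ne_of (by rintro (⟨h1, h2⟩ | ⟨h1, h2⟩) <;> simp_all)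
      · exact sym2_ne_of (by rintro (⟨h1, h2⟩ | ⟨h1, h2⟩) <;> simp_all)
    · refine h ⟨x1, y1, by simp, by simp, ?_, ?_, ?_⟩
      · rw [SimpleGraph.deleteEdges_adj]
        exact ⟨(SimpleGraph.top_adj _ _).mpr h11, by simpa using he1⟩
      · exact sym2_ne_of (by rintro (⟨h1, h2⟩ | ⟨h1, h2⟩) <;> simp_all)
      · exact sym2_ne_of (by rintro (⟨h1, h2⟩ | ⟨h1, h2⟩) <;> simp_all)

lemma eop_card_le (e : Sym2 V) (B : Set (Sym2 V))
    (hB : IsEOP ((⊤ : SimpleGraph V).deleteEdges {e}) B) : B.ncard ≤ 2 := by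
  by_contra hc
  push_neg at hc
  have hfin : B.Finite := by
    by_contra hinf
    rw [Set.Infinite.ncard (by exact hinf)] at hc
    omega
  obtain ⟨f, g, hfB, hgB, hfg⟩ := (Set.one_lt_ncard_iff hfin).mp (by omega)
  obtain ⟨k, hkB, hk⟩ : ∃ k ∈ B, k ≠ f ∧ k ≠ g := by
    by_contra hno
    push_neg at hno
    have hsub : B ⊆ {f, g} := by
      intro z hz
      rcases (em (z = f)) with rfl | h1
      · exact Set.mem_insert _ _
      · right; exact hno z hz h1
    have := Set.ncard_le_ncard hsub ((Set.finite_singleton _).insert _)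
    have h2 : ({f, g} : Set (Sym2 V)).ncard ≤ 2 := by
      apply le_trans (Set.ncard_insert_le _ _)
      simp
    omega
  obtain ⟨u, a, b, hua, hub, hab, hea, hfa, hgb⟩ :=
    pair_struct e f g (hB.1 hfB) (hB.1 hgB) hfg (hB.2 f hfB g hgB hfg)
  obtain ⟨u', a', b', hua', hub', hab', hea', hfa', hkb'⟩ :=
    pair_struct e f k (hB.1 hfB) (hB.1 hkB) (Ne.symm hk.1) (hB.2 f hfB k hkB (Ne.symm hk.1))
  rw [hea] at hea'
  rcases Sym2.eq_iff.mp hea' with ⟨rfl, rfl⟩ | ⟨rfl, rfl⟩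
  · -- a' = a, b' = b
    have : u' = u := by
      rw [hfa] at hfa'
      rcases Sym2.eq_iff.mp hfa' with ⟨h1, _⟩ | ⟨h1, h2⟩
      · exact h1.symm
      · exact absurd h2.symm hua'
    rw [this, ← hgb] at hkb'
    exact hk.2 hkb'
  · -- a' = b, b' = a
    rw [hfa] at hfa'
    rcases Sym2.eq_iff.mp hfa' with ⟨_, h2⟩ | ⟨h1, _⟩
    · exact hab h2
    · exact hub h1

theorem stmt10 (n : ℕ) (hn : 3 ≤ n) (e : Sym2 (Fin n))
    (he : e ∈ (⊤ : SimpleGraph (Fin n)).edgeSet) :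
    eopNum ((⊤ : SimpleGraph (Fin n)).deleteEdges {e}) = 2 ∧
    eopNum (⊤ : SimpleGraph (Fin n)) + 1 = 2 := by
  constructor
  · -- eopNum (K_n - e) = 2
    obtain ⟨a, b, rfl⟩ : ∃ x y, e = s(x,y) := by
      induction e using Sym2.ind with | _ x y => exact ⟨x, y, rfl⟩
    have hab : a ≠ b := by
      rw [SimpleGraph.mem_edgeSet, SimpleGraph.top_adj] at he; exact he
    -- a vertex different from a and b
    obtain ⟨c, hca, hcb⟩ : ∃ c : Fin n, c ≠ a ∧ c ≠ b := by
      by_contra hno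
      push_neg at hno
      have : (Finset.univ : Finset (Fin n)) ⊆ {a, b} := by
        intro z _
        rcases em (z = a) with rfl | hz
        · exact Finset.mem_insert_self _ _
        · simp [hno z hz]
      have := Finset.card_le_card this
      simp only [Finset.card_univ, Fintype.card_fin] at this
      have h2 : ({a, b} : Finset (Fin n)).card ≤ 2 := by
        apply le_trans (Finset.card_insert_le _ _); simp
      omega
    set G := (⊤ : SimpleGraph (Fin n)).deleteEdges {s(a,b)} with hG
    have hmem : ∀ x y : Fin n, x ≠ y → s(x,y) ≠ s(a,b) → s(x,y) ∈ G.edgeSet := by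
      intro x y h1 h2
      rw [SimpleGraph.mem_edgeSet, SimpleGraph.deleteEdges_adj]
      exact ⟨(SimpleGraph.top_adj _ _).mpr h1, by simpa using h2⟩
    have hf1 : s(c,a) ∈ G.edgeSet :=
      hmem c a hca (sym2_ne_of (by rintro (⟨h1, h2⟩ | ⟨h1, h2⟩) <;> simp_all))
    have hf2 : s(c,b) ∈ G.edgeSet :=
      hmem c b hcb (sym2_ne_of (by rintro (⟨h1, h2⟩ | ⟨h1, h2⟩) <;> simp_all))
    have hne12 : s(c,a) ≠ s(c,b) :=
      sym2_ne_of (by rintro (⟨h1, h2⟩ | ⟨h1, h2⟩) <;> simp_all)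
    have hnce : ¬ HasCommonEdge G s(c,a) s(c,b) := by
      rintro ⟨x, y, hx, hy, hadj, h1, h2⟩
      rw [SimpleGraph.deleteEdges_adj] at hadj
      obtain ⟨hadj1, hadj2⟩ := hadj
      rw [SimpleGraph.top_adj] at hadj1
      simp only [Set.mem_singleton_iff] at hadj2
      rcases Sym2.mem_iff.mp hx with rfl | rfl <;> rcases Sym2.mem_iff.mp hy with rfl | rfl
      · exact hadj1 rfl
      · exact h2 rfl
      · exact h1 Sym2.eq_swap
      · exact hadj2 rfl
    have hEOP : IsEOP G {s(c,a), s(c,b)} := by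
      constructor
      · rintro z (rfl | rfl)
        · exact hf1
        · exact hf2
      · rintro e₁ (rfl | rfl) e₂ (rfl | rfl) hne hce
        · exact hne rfl
        · exact hnce hce
        · -- symmetric case
          obtain ⟨x, y, hx, hy, hadj, h1, h2⟩ := hce
          exact hnce ⟨y, x, hy, hx, hadj.symm, by rwa [Sym2.eq_swap], by rwa [Sym2.eq_swap]⟩
        · exact hne rfl
    have h2mem : 2 ∈ {m | ∃ B : Set (Sym2 (Fin n)), IsEOP G B ∧ B.ncard = m} :=
      ⟨{s(c,a), s(c,b)}, hEOP, Set.ncard_pair hne12⟩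
    have hbdd : ∀ m ∈ {m | ∃ B : Set (Sym2 (Fin n)), IsEOP G B ∧ B.ncard = m}, m ≤ 2 := by
      rintro m ⟨B, hB, rfl⟩
      exact eop_card_le _ B hB
    exact le_antisymm (csSup_le ⟨2, h2mem⟩ hbdd) (le_csSup ⟨2, hbdd⟩ h2mem)
  · -- eopNum K_n = 1
    have h1 : eopNum (⊤ : SimpleGraph (Fin n)) = 1 := by
      set v0 : Fin n := ⟨0, by omega⟩ with hv0
      set v1 : Fin n := ⟨1, by omega⟩ with hv1
      have htop : (⊤ : SimpleGraph (Fin n)).deleteEdges {s(v0, v0)} = ⊤ := by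
        ext x y
        rw [SimpleGraph.deleteEdges_adj]
        simp only [SimpleGraph.top_adj, Set.mem_singleton_iff, and_iff_left_iff_imp]
        intro hxy hh
        rcases Sym2.eq_iff.mp hh with ⟨rfl, rfl⟩ | ⟨rfl, rfl⟩ <;> exact hxy rfl
      have h01 : v0 ≠ v1 := by
        intro hh
        have := congrArg Fin.val hh
        simp [hv0, hv1] at this
      have h1mem : 1 ∈ {m | ∃ B : Set (Sym2 (Fin n)),
          IsEOP (⊤ : SimpleGraph (Fin n)) B ∧ B.ncard = m} := by
        refine ⟨{s(v0, v1)}, ⟨?_, ?_⟩, Set.ncard_singleton _⟩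
        · rintro z rfl
          rw [SimpleGraph.mem_edgeSet, SimpleGraph.top_adj]
          exact h01
        · rintro e₁ rfl e₂ rfl hne
          exact absurd rfl hne
      have hbdd : ∀ m ∈ {m | ∃ B : Set (Sym2 (Fin n)),
          IsEOP (⊤ : SimpleGraph (Fin n)) B ∧ B.ncard = m}, m ≤ 1 := by
        rintro m ⟨B, hB, rfl⟩
        rw [← htop] at hB
        by_contra hc
        push_neg at hc
        have hfin : B.Finite := by
          by_contra hinf
          rw [Set.Infinite.ncard (by exact hinf)] at hc
          omega
        obtain ⟨f, g, hfB, hgB, hfg⟩ := (Set.one_lt_ncard_iff hfin).mp hc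
        obtain ⟨u, a, b, hua, hub, hab, hea, -, -⟩ :=
          pair_struct _ f g (hB.1 hfB) (hB.1 hgB) hfg (hB.2 f hfB g hgB hfg)
        rcases Sym2.eq_iff.mp hea with ⟨rfl, rfl⟩ | ⟨rfl, rfl⟩ <;> exact hab rfl
      exact le_antisymm (csSup_le ⟨1, h1mem⟩ hbdd) (le_csSup ⟨1, hbdd⟩ h1mem)
    omega
end

section
/- Let G be a finite simple graph with n vertices and m edges, and let H be the graph obtained from G by adding m + n + 1 new vertices v, u_1, ..., u_{m+n} and joining v by an edge to every vertex of V(G) ∪ {u_1, ..., u_{m+n}} (the u_i are pairwise nonadjacent and nonadjacent to V(G)). Then rho_e^o(H) = m + n + alpha(G). -/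
/-!
Write `v` for the hub `Sum.inr 0`. If `vw₁, vw₂` lie in an EOP set and `w₁w₂` is an edge, then
`w₁w₂` is a common edge of them; so the far ends of the edges at `v` form an independent set of
`H`. An EOP set all of whose edges pass through `v` therefore has at most `α(G) + m + n` edges, and
joining `v` to a maximum independent set of `G` and to all the `u_i` attains this. If instead an
EOP set contains an edge `xy` of `G`, every edge `vw` of it has `w ∈ {x, y}` (otherwise `xv` is a
common edge), and `vx, vy` cannot both occur; so it has at most `m + 1 ≤ m + n + α(G)` edges.
-/

open scoped Classical

variable {V : Type*}

/-- The independence number of `G`. -/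
noncomputable def indepNum (G : SimpleGraph V) : ℕ :=
  sSup {n | ∃ I : Set V, (∀ a ∈ I, ∀ b ∈ I, ¬ G.Adj a b) ∧ I.ncard = n}

/-- The graph `H` obtained from `G` by adding `k + 1` new vertices
`v = Sum.inr 0` and `u_i = Sum.inr i` (for `i ≠ 0`) and joining `v` by an edge to every
other vertex; the vertices `u_i` are pairwise nonadjacent and nonadjacent to `V(G)`. -/
def auxGraph (G : SimpleGraph V) (k : ℕ) : SimpleGraph (V ⊕ Fin (k + 1)) where
  Adj x y :=
    (∃ a b : V, x = Sum.inl a ∧ y = Sum.inl b ∧ G.Adj a b) ∨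
    (x = Sum.inr 0 ∧ y ≠ Sum.inr 0) ∨ (y = Sum.inr 0 ∧ x ≠ Sum.inr 0)
  symm := by
    constructor
    rintro x y (⟨a, b, rfl, rfl, h⟩ | ⟨rfl, h⟩ | ⟨rfl, h⟩)
    · exact Or.inl ⟨b, a, rfl, rfl, h.symm⟩
    · exact Or.inr (Or.inr ⟨rfl, h⟩)
    · exact Or.inr (Or.inl ⟨rfl, h⟩)
  loopless := by
    constructor
    rintro x (⟨a, b, h1, h2, h⟩ | ⟨rfl, h⟩ | ⟨rfl, h⟩)
    · subst h1; cases h2; exact G.irrefl h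
    · exact h rfl
    · exact h rfl

open Set

section EdgeOpenPacking

variable {α : Type*} {H : SimpleGraph α} {B : Set (Sym2 α)}

lemma Sym2.mk_left_injective (v : α) : Function.Injective fun w => s(v, w) :=
  (Sym2.mkEmbedding v).injective

lemma isEOP_empty (H : SimpleGraph α) : IsEOP H ∅ :=
  ⟨empty_subset _, by simp⟩

lemma eopNum_le {N : ℕ} (h : ∀ B, IsEOP H B → B.ncard ≤ N) : eopNum H ≤ N :=
  csSup_le ⟨0, ∅, isEOP_empty H, ncard_empty _⟩ (by rintro _ ⟨B, hB, rfl⟩; exact h B hB)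

lemma IsEOP.ncard_le_eopNum_s12 [Finite α] (hB : IsEOP H B) : B.ncard ≤ eopNum H :=
  le_csSup ⟨Nat.card (Sym2 α), by rintro _ ⟨B, -, rfl⟩; exact ncard_le_card B⟩ ⟨B, hB, rfl⟩

lemma isEOP_image_mk {v : α} {S : Set α} (hadj : ∀ w ∈ S, H.Adj v w)
    (hS : ∀ w₁ ∈ S, ∀ w₂ ∈ S, ¬ H.Adj w₁ w₂) : IsEOP H ((fun w => s(v, w)) '' S) := by
  refine ⟨by rintro _ ⟨w, hw, rfl⟩; exact hadj w hw, ?_⟩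
  rintro _ ⟨w₁, hw₁, rfl⟩ _ ⟨w₂, hw₂, rfl⟩ - ⟨x, y, hx, hy, hxy, h₁, h₂⟩
  rw [Sym2.mem_iff] at hx hy
  rcases hx with rfl | rfl <;> rcases hy with rfl | rfl
  · exact H.irrefl hxy
  · exact h₂ rfl
  · exact h₁ Sym2.eq_swap
  · exact hS _ hw₁ _ hw₂ hxy

lemma IsEOP.not_adj_of_mk_mem (hB : IsEOP H B) {v w₁ w₂ : α} (h₁ : s(v, w₁) ∈ B)
    (h₂ : s(v, w₂) ∈ B) : ¬ H.Adj w₁ w₂ := by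
  intro hw
  have hv₁ : v ≠ w₁ := (hB.1 h₁).ne
  have hv₂ : v ≠ w₂ := (hB.1 h₂).ne
  refine hB.2 _ h₁ _ h₂ (fun h => hw.ne (Sym2.mk_left_injective v h))
    ⟨w₁, w₂, Sym2.mem_mk_right _ _, Sym2.mem_mk_right _ _, hw, ?_, ?_⟩ <;>
  · rw [Ne, Sym2.eq_iff]; tauto

lemma IsEOP.mem_of_mk_mem (hB : IsEOP H B) {e : Sym2 α} (he : e ∈ B) {x v w : α} (hx : x ∈ e)
    (hv : v ∉ e) (hxv : H.Adj x v) (hw : s(v, w) ∈ B) : w ∈ e := by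
  by_contra hwe
  refine hB.2 _ he _ hw (fun h => hv (h ▸ Sym2.mem_mk_left _ _))
    ⟨x, v, hx, Sym2.mem_mk_left _ _, hxv, fun h => hv (h ▸ Sym2.mem_mk_right _ _), ?_⟩
  rw [Ne, Sym2.eq_iff]
  rintro (⟨rfl, -⟩ | ⟨rfl, -⟩)
  · exact hv hx
  · exact hwe hx

lemma IsEOP.subsingleton_of_mem (hB : IsEOP H B) {e : Sym2 α} (he : e ∈ B) {x v : α}
    (hx : x ∈ e) (hv : v ∉ e) (hxv : H.Adj x v) : {e' ∈ B | v ∈ e'}.Subsingleton := by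
  rintro _ ⟨h₁, ⟨w₁, rfl⟩⟩ _ ⟨h₂, ⟨w₂, rfl⟩⟩
  by_contra hne
  have hw : w₁ ≠ w₂ := fun h => hne (h ▸ rfl)
  have he_eq : e = s(w₁, w₂) := (Sym2.mem_and_mem_iff hw).1
    ⟨hB.mem_of_mk_mem he hx hv hxv h₁, hB.mem_of_mk_mem he hx hv hxv h₂⟩
  exact hB.not_adj_of_mk_mem h₁ h₂ (he_eq ▸ hB.1 he :)

end EdgeOpenPacking

section Independence

variable [Finite V] {G : SimpleGraph V}

lemma ncard_le_indepNum {I : Set V} (hI : ∀ a ∈ I, ∀ b ∈ I, ¬ G.Adj a b) :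
    I.ncard ≤ indepNum G :=
  le_csSup ⟨Nat.card V, by rintro _ ⟨J, -, rfl⟩; exact ncard_le_card J⟩ ⟨I, hI, rfl⟩

lemma exists_ncard_eq_indepNum (G : SimpleGraph V) :
    ∃ I : Set V, (∀ a ∈ I, ∀ b ∈ I, ¬ G.Adj a b) ∧ I.ncard = indepNum G :=
  Nat.sSup_mem (s := {n | ∃ I : Set V, (∀ a ∈ I, ∀ b ∈ I, ¬ G.Adj a b) ∧ I.ncard = n})
    ⟨0, ∅, by simp, ncard_empty _⟩ ⟨Nat.card V, by rintro _ ⟨J, -, rfl⟩; exact ncard_le_card J⟩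

lemma one_le_indepNum [Nonempty V] (G : SimpleGraph V) : 1 ≤ indepNum G := by
  obtain ⟨a⟩ := ‹Nonempty V›
  simpa using ncard_le_indepNum (G := G) (I := {a}) (by simp)

end Independence

section AuxGraph

variable {G : SimpleGraph V} {k : ℕ} {B : Set (Sym2 (V ⊕ Fin (k + 1)))}

lemma auxGraph_adj_inr_zero {w : V ⊕ Fin (k + 1)} :
    (auxGraph G k).Adj (Sum.inr 0) w ↔ w ≠ Sum.inr 0 := by
  simp [auxGraph]

lemma auxGraph_adj_inl {a b : V} : (auxGraph G k).Adj (Sum.inl a) (Sum.inl b) ↔ G.Adj a b := by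
  simp [auxGraph]

lemma mem_image_map_inl_of_inr_zero_notMem {e : Sym2 (V ⊕ Fin (k + 1))}
    (he : e ∈ (auxGraph G k).edgeSet) (hv : Sum.inr 0 ∉ e) :
    e ∈ Sym2.map Sum.inl '' G.edgeSet := by
  induction e using Sym2.ind with
  | _ x y =>
    rcases he with ⟨a, b, rfl, rfl, hab⟩ | ⟨rfl, -⟩ | ⟨rfl, -⟩
    · exact ⟨s(a, b), hab, rfl⟩
    · exact absurd (Sym2.mem_mk_left _ _) hv
    · exact absurd (Sym2.mem_mk_right _ _) hv

lemma ncard_image_inl_union_image_inr_compl [Finite V] (I : Set V) :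
    (Sum.inl '' I ∪ Sum.inr '' {0}ᶜ : Set (V ⊕ Fin (k + 1))).ncard = I.ncard + k := by
  rw [ncard_union_eq (by simp [disjoint_left]), ncard_image_of_injective _ Sum.inl_injective,
    ncard_image_of_injective _ Sum.inr_injective, ncard_compl, ncard_singleton]
  simp

lemma exists_isEOP_auxGraph_ncard_eq [Finite V] (G : SimpleGraph V) (k : ℕ) :
    ∃ B, IsEOP (auxGraph G k) B ∧ B.ncard = indepNum G + k := by
  obtain ⟨I, hI, hIcard⟩ := exists_ncard_eq_indepNum G
  refine ⟨(fun w => s(Sum.inr 0, w)) '' (Sum.inl '' I ∪ Sum.inr '' {0}ᶜ), isEOP_image_mk ?_ ?_,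
    ?_⟩
  · rintro _ (⟨a, -, rfl⟩ | ⟨i, hi, rfl⟩) <;> simp_all [auxGraph_adj_inr_zero]
  · rintro _ (⟨a, ha, rfl⟩ | ⟨i, hi, rfl⟩) _ (⟨b, hb, rfl⟩ | ⟨j, hj, rfl⟩) hadj
    · exact hI a ha b hb (auxGraph_adj_inl.1 hadj)
    all_goals simp_all [auxGraph]
  · rw [ncard_image_of_injective _ (Sym2.mk_left_injective _),
      ncard_image_inl_union_image_inr_compl, hIcard]

lemma IsEOP.ncard_le_indepNum_add [Finite V] (hB : IsEOP (auxGraph G k) B)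
    (hall : ∀ e ∈ B, Sum.inr 0 ∈ e) : B.ncard ≤ indepNum G + k := by
  set S : Set (V ⊕ Fin (k + 1)) := {w | s(Sum.inr 0, w) ∈ B}
  have hBS : B ⊆ (fun w => s(Sum.inr 0, w)) '' S := by
    intro e he
    obtain ⟨w, rfl⟩ := hall e he
    exact ⟨w, he, rfl⟩
  have hS : S ⊆ Sum.inl '' (Sum.inl ⁻¹' S) ∪ Sum.inr '' {0}ᶜ := by
    rintro (a | i) hw
    · exact Or.inl ⟨a, hw, rfl⟩
    · refine Or.inr ⟨i, fun hi => ?_, rfl⟩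
      rw [mem_singleton_iff.1 hi] at hw
      exact (auxGraph G k).irrefl (hB.1 hw)
  have hindep : ∀ a ∈ Sum.inl ⁻¹' S, ∀ b ∈ Sum.inl ⁻¹' S, ¬ G.Adj a b := fun a ha b hb hab =>
    hB.not_adj_of_mk_mem ha hb (auxGraph_adj_inl.2 hab)
  calc B.ncard ≤ ((fun w => s(Sum.inr 0, w)) '' S).ncard := ncard_le_ncard hBS
    _ = S.ncard := ncard_image_of_injective _ (Sym2.mk_left_injective _)
    _ ≤ (Sum.inl ⁻¹' S).ncard + k := (ncard_le_ncard hS).trans_eq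
      (ncard_image_inl_union_image_inr_compl _)
    _ ≤ indepNum G + k := by grw [ncard_le_indepNum hindep]

lemma IsEOP.ncard_le_ncard_edgeSet_add_indepNum [Finite V] (hB : IsEOP (auxGraph G k) B)
    {e : Sym2 (V ⊕ Fin (k + 1))} (he : e ∈ B) (hv : Sum.inr 0 ∉ e) :
    B.ncard ≤ G.edgeSet.ncard + indepNum G := by
  have hmap : ∀ f ∈ B, Sum.inr 0 ∉ f → f ∈ Sym2.map Sum.inl '' G.edgeSet :=
    fun f hf hfv => mem_image_map_inl_of_inr_zero_notMem (hB.1 hf) hfv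
  obtain ⟨e₀, -, -⟩ := hmap e he hv
  have : Nonempty V := ⟨e₀.out.1⟩
  have hB_sub : B ⊆ Sym2.map Sum.inl '' G.edgeSet ∪ {f ∈ B | Sum.inr 0 ∈ f} := by
    intro f hf
    by_cases hfv : Sum.inr 0 ∈ f
    · exact Or.inr ⟨hf, hfv⟩
    · exact Or.inl (hmap f hf hfv)
  have hhub : {f ∈ B | Sum.inr 0 ∈ f}.ncard ≤ 1 := ncard_le_one_iff_subsingleton.2 <|
    hB.subsingleton_of_mem he e.out_fst_mem hv
      (auxGraph_adj_inr_zero.2 fun h => hv (h ▸ e.out_fst_mem)).symm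
  calc B.ncard ≤ (Sym2.map Sum.inl '' G.edgeSet ∪ {f ∈ B | Sum.inr 0 ∈ f}).ncard :=
        ncard_le_ncard hB_sub
    _ ≤ (Sym2.map Sum.inl '' G.edgeSet).ncard + {f ∈ B | Sum.inr 0 ∈ f}.ncard :=
        ncard_union_le _ _
    _ ≤ G.edgeSet.ncard + indepNum G := by
        rw [ncard_image_of_injective _ (Sym2.map.injective Sum.inl_injective)]
        have := one_le_indepNum G
        omega

end AuxGraph

theorem stmt12_general [Fintype V] (G : SimpleGraph V) (n m : ℕ)
    (hm : m = G.edgeSet.ncard) :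
    eopNum (auxGraph G (m + n)) = m + n + indepNum G := by
  refine le_antisymm (eopNum_le fun B hB => ?_) ?_
  · by_cases hall : ∀ e ∈ B, Sum.inr 0 ∈ e
    · have := hB.ncard_le_indepNum_add hall
      omega
    · obtain ⟨e, he, hv⟩ := not_forall₂.1 hall
      have := hB.ncard_le_ncard_edgeSet_add_indepNum he hv
      omega
  · obtain ⟨B, hB, hcard⟩ := exists_isEOP_auxGraph_ncard_eq G (m + n)
    have := hB.ncard_le_eopNum_s12
    omega

/-- With `n = |V(G)|` and `m = |E(G)|`, the graph `H` obtained from `G` by adding the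
universal-to-be vertex `v` together with `m + n` pendant vertices `u_1, …, u_{m+n}`
attached to `v` satisfies `ρₑᵒ(H) = m + n + α(G)`. -/
theorem stmt12 [Fintype V] (G : SimpleGraph V) (n m : ℕ)
    (hn : n = Fintype.card V) (hm : m = G.edgeSet.ncard) :
    eopNum (auxGraph G (m + n)) = m + n + indepNum G :=
  stmt12_general G n m hm
end
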